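/- arXiv:1710.02518 — 11 statements merged into one kernel-verified Lean document; each statement's English description precedes it below -/
import Mathlib

section
/- Let U be a family of faces of a simplicial complex D. Then E(U*) ⊆ E(U), where E(·) denotes the set of essential vertices (vertices appearing in inclusion-minimal elements). In particular, if (U₁, U₂) is a dual pair (U₁ = U₂* and U₂ = U₁*), then E(U₁) = E(U₂). -/
variable {V : Type*} [DecidableEq V]

/-- A simplicial complex: a family of finite sets closed under taking subsets. -/
def IsComplex (D : Set (Finset V)) : Prop :=
  ∀ σ ∈ D, ∀ τ : Finset V, τ ⊆ σ → τ ∈ D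

/-- The intersecting dual `U*` of a family `U` of faces of `D`. -/
def dualSet (D U : Set (Finset V)) : Set (Finset V) :=
  {σ' ∈ D | ∀ σ ∈ U, (σ' ∩ σ).Nonempty}

/-- The upper set generated by `U` inside `D`. -/
def upperGen (D U : Set (Finset V)) : Set (Finset V) :=
  {σ' ∈ D | ∃ σ ∈ U, σ ⊆ σ'}

/-- Essential vertices: vertices appearing in inclusion-minimal elements of `U`. -/
def essVerts (U : Set (Finset V)) : Set V :=
  {v | ∃ σ ∈ U, v ∈ σ ∧ ∀ τ ∈ U, τ ⊆ σ → τ = σ}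

/-- Flag complex: every nonempty set of vertices pairwise spanning faces is a face. -/
def IsFlag (C : Set (Finset V)) : Prop :=
  ∀ τ : Finset V, τ.Nonempty → (∀ a ∈ τ, ∀ b ∈ τ, ({a, b} : Finset V) ∈ C) → τ ∈ C

/-- A facet: an inclusion-maximal face. -/
def IsFacet (C : Set (Finset V)) (A : Finset V) : Prop :=
  A ∈ C ∧ ∀ B ∈ C, A ⊆ B → B = A

/-- Pure of dimension `d`: every face lies in a facet and all facets have `d+1` vertices. -/
def IsPure (C : Set (Finset V)) (d : ℕ) : Prop :=
  (∀ σ ∈ C, ∃ A, IsFacet C A ∧ σ ⊆ A) ∧ ∀ A, IsFacet C A → A.card = d + 1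

/-- Without boundary: every non-maximal face lies in at least two facets. -/
def NoBoundary (C : Set (Finset V)) : Prop :=
  ∀ σ ∈ C, ¬ IsFacet C σ →
    ∃ A B, IsFacet C A ∧ IsFacet C B ∧ A ≠ B ∧ σ ⊆ A ∧ σ ⊆ B

/-- The missing edge exchange property for a pure `d`-complex. -/
def MEEP (C : Set (Finset V)) (d : ℕ) : Prop :=
  ∀ σ ∈ C, σ.card = d → ∀ v ∉ σ, IsFacet C (insert v σ) →
    ∃ u, u ≠ v ∧ u ∉ σ ∧ IsFacet C (insert u σ) ∧ ({u, v} : Finset V) ∉ C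

/-- The star of a vertex: the set of facets containing it. -/
def vertexStar (C : Set (Finset V)) (v : V) : Set (Finset V) :=
  {A | IsFacet C A ∧ v ∈ A}

/-- An intersecting family: any two members share a vertex. -/
def Intersecting (F : Set (Finset V)) : Prop :=
  ∀ A ∈ F, ∀ B ∈ F, (A ∩ B).Nonempty

/-- Pure-EKR: every intersecting family of facets is at most as large as some vertex star. -/
def PureEKR (C : Set (Finset V)) : Prop :=
  ∀ F : Set (Finset V), (∀ A ∈ F, IsFacet C A) → Intersecting F →
    ∃ v, ({v} : Finset V) ∈ C ∧ F.ncard ≤ (vertexStar C v).ncard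

/-!
If `σ'` is a minimal member of `U*` and `v ∈ σ'`, then the face `σ' \ {v}` is not in `U*`, so
some `τ ∈ U` misses it. Every member of `U` below `τ`, in particular a minimal one, still meets
`σ'`, and can only do so in `v`; hence `v` is essential for `U`.
-/

omit [DecidableEq V] in
theorem mem_essVerts_iff {U : Set (Finset V)} {v : V} :
    v ∈ essVerts U ↔ ∃ σ, Minimal (· ∈ U) σ ∧ v ∈ σ := by
  refine ⟨fun ⟨σ, hσ, hv, hmin⟩ ↦ ⟨σ, ⟨hσ, fun τ hτ hτσ ↦ (hmin τ hτ hτσ).ge⟩, hv⟩,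
    fun ⟨σ, hσ, hv⟩ ↦ ⟨σ, hσ.prop, hv, fun τ hτ hτσ ↦ hσ.eq_of_le hτ hτσ⟩⟩

theorem exists_disjoint_erase_of_minimal_dualSet {D U : Set (Finset V)} (hD : IsComplex D)
    {σ' : Finset V} (hσ' : Minimal (· ∈ dualSet D U) σ') {v : V} (hv : v ∈ σ') :
    ∃ τ ∈ U, Disjoint (σ'.erase v) τ := by
  have hnot : σ'.erase v ∉ dualSet D U := fun h ↦
    Finset.notMem_erase v σ' (by rwa [hσ'.eq_of_le h (Finset.erase_subset v σ')])
  simp only [dualSet, Set.mem_ofPred_eq, not_and, not_forall, exists_prop,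
    Finset.not_nonempty_iff_eq_empty, ← Finset.disjoint_iff_inter_eq_empty] at hnot
  exact hnot (hD σ' hσ'.prop.1 _ (Finset.erase_subset v σ'))

theorem essVerts_dualSet_subset {D : Set (Finset V)} (hD : IsComplex D) (U : Set (Finset V)) :
    essVerts (dualSet D U) ⊆ essVerts U := by
  simp only [Set.subset_def, mem_essVerts_iff]
  rintro v ⟨σ', hσ', hv⟩
  obtain ⟨τ, hτ, hdisj⟩ := exists_disjoint_erase_of_minimal_dualSet hD hσ' hv
  obtain ⟨ρ, hρτ, hρ⟩ := exists_minimal_le_of_wellFoundedLT (· ∈ U) τ hτ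
  obtain ⟨w, hw⟩ := hσ'.prop.2 ρ hρ.prop
  rw [Finset.mem_inter] at hw
  have hwv : w = v := by
    by_contra hne
    exact Finset.disjoint_left.mp hdisj (Finset.mem_erase.mpr ⟨hne, hw.1⟩) (hρτ hw.2)
  exact ⟨ρ, hρ, hwv ▸ hw.2⟩

theorem essVerts_eq_of_dualPair {D U₁ U₂ : Set (Finset V)} (hD : IsComplex D)
    (h₁ : U₁ = dualSet D U₂) (h₂ : U₂ = dualSet D U₁) : essVerts U₁ = essVerts U₂ := by
  apply Set.Subset.antisymm
  · exact h₁ ▸ essVerts_dualSet_subset hD U₂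
  · exact h₂ ▸ essVerts_dualSet_subset hD U₁

theorem stmt2_general (D : Set (Finset V)) (hD : IsComplex D)
    (U : Set (Finset V)) :
    essVerts (dualSet D U) ⊆ essVerts U ∧
      ∀ U₁ U₂ : Set (Finset V), U₁ ⊆ D → U₂ ⊆ D →
        U₁ = dualSet D U₂ → U₂ = dualSet D U₁ →
        essVerts U₁ = essVerts U₂ :=
  ⟨essVerts_dualSet_subset hD U, fun _ _ _ _ h₁ h₂ ↦ essVerts_eq_of_dualPair hD h₁ h₂⟩

/-- E(U*) ⊆ E(U); in particular dual pairs have equal essential vertices. -/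
theorem stmt2 (D : Set (Finset V)) (hD : IsComplex D)
    (U : Set (Finset V)) (hU : U ⊆ D) :
    essVerts (dualSet D U) ⊆ essVerts U ∧
      ∀ U₁ U₂ : Set (Finset V), U₁ ⊆ D → U₂ ⊆ D →
        U₁ = dualSet D U₂ → U₂ = dualSet D U₁ →
        essVerts U₁ = essVerts U₂ :=
  stmt2_general D hD U
end

section
/- A simplicial complex C is flag if and only if for every face σ of C the contraction C/σ is a simplicial complex (i.e., no two distinct cells of C/σ have the same vertex set). -/
/-!
If `C` is flag and `τ₁ \ σ = τ₂ \ σ`, every vertex of `τ₁ ∪ τ₂` lies in `σ` or in `τ₁ ∩ τ₂`, so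
every pair of vertices of `τ₁ ∪ τ₂` lies in one of the faces `σ`, `τ₁`, `τ₂`, and flagness makes
`τ₁ ∪ τ₂` a face. Conversely, if all contractions are simplicial and `τ` has all its edges, pick
distinct `a, b ∈ τ`: by induction `τ.erase a` and `τ.erase b` are faces, and they become the same
cell in `C/{a, b}`, so their union `τ` is a face.
-/

variable {V : Type*} [DecidableEq V]

/-- `C/σ` is simplicial: two faces of `C` with the same image in `C/σ` lie in a common face,
namely their union. -/
def ContractionIsSimplicial (C : Set (Finset V)) (σ : Finset V) : Prop :=
  ∀ τ₁ ∈ C, ∀ τ₂ ∈ C,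
    τ₁ \ σ = τ₂ \ σ → ((τ₁ ∩ σ).Nonempty ↔ (τ₂ ∩ σ).Nonempty) → τ₁ ∪ τ₂ ∈ C

namespace IsComplex

variable {C : Set (Finset V)}

theorem pair_mem (hC : IsComplex C) {σ : Finset V} (hσ : σ ∈ C) {a b : V} (ha : a ∈ σ)
    (hb : b ∈ σ) : ({a, b} : Finset V) ∈ C :=
  hC σ hσ _ (Finset.insert_subset ha (Finset.singleton_subset_iff.mpr hb))

theorem pair_mem_of_mem_inter_of_mem_union (hC : IsComplex C) {τ₁ τ₂ : Finset V} (h₁ : τ₁ ∈ C)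
    (h₂ : τ₂ ∈ C) {a b : V} (ha : a ∈ τ₁ ∩ τ₂) (hb : b ∈ τ₁ ∪ τ₂) :
    ({a, b} : Finset V) ∈ C := by
  rw [Finset.mem_inter] at ha
  rcases Finset.mem_union.mp hb with hb | hb
  · exact hC.pair_mem h₁ ha.1 hb
  · exact hC.pair_mem h₂ ha.2 hb

end IsComplex

theorem Finset.mem_or_mem_inter_of_sdiff_eq {σ τ₁ τ₂ : Finset V} (hd : τ₁ \ σ = τ₂ \ σ) {x : V}
    (hx : x ∈ τ₁ ∪ τ₂) : x ∈ σ ∨ x ∈ τ₁ ∩ τ₂ := by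
  have hdx := Finset.ext_iff.mp hd x
  simp only [Finset.mem_sdiff, Finset.mem_union, Finset.mem_inter] at hdx hx ⊢
  tauto

theorem IsFlag.contractionIsSimplicial {C : Set (Finset V)} (hflag : IsFlag C)
    (hC : IsComplex C) {σ : Finset V} (hσ : σ ∈ C) : ContractionIsSimplicial C σ := by
  intro τ₁ h₁ τ₂ h₂ hd _
  rcases (τ₁ ∪ τ₂).eq_empty_or_nonempty with hempty | hne
  · rw [Finset.union_eq_empty] at hempty
    rwa [hempty.1, Finset.empty_union]
  refine hflag _ hne fun a ha b hb => ?_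
  rcases Finset.mem_or_mem_inter_of_sdiff_eq hd ha with haσ | ha12
  · rcases Finset.mem_or_mem_inter_of_sdiff_eq hd hb with hbσ | hb12
    · exact hC.pair_mem hσ haσ hbσ
    · rw [Finset.pair_comm]
      exact hC.pair_mem_of_mem_inter_of_mem_union h₁ h₂ hb12 ha
  · exact hC.pair_mem_of_mem_inter_of_mem_union h₁ h₂ ha12 hb

theorem mem_of_erase_mem_of_contractionIsSimplicial {C : Set (Finset V)} {τ : Finset V} {a b : V}
    (hab : a ≠ b) (ha : a ∈ τ) (hb : b ∈ τ)
    (hcontr : ContractionIsSimplicial C {a, b}) (hτa : τ.erase a ∈ C) (hτb : τ.erase b ∈ C) :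
    τ ∈ C := by
  have hd : τ.erase a \ {a, b} = τ.erase b \ {a, b} := by
    ext x
    simp only [Finset.mem_sdiff, Finset.mem_erase, Finset.mem_insert, Finset.mem_singleton]
    tauto
  have hmeet : ((τ.erase a ∩ {a, b}).Nonempty ↔ (τ.erase b ∩ {a, b}).Nonempty) :=
    iff_of_true ⟨b, by simp [hab.symm, hb]⟩ ⟨a, by simp [hab, ha]⟩
  have hunion : τ.erase a ∪ τ.erase b = τ := by
    ext x
    simp only [Finset.mem_union, Finset.mem_erase]
    grind
  simpa only [hunion] using hcontr _ hτa _ hτb hd hmeet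

theorem isFlag_of_contractionIsSimplicial {C : Set (Finset V)}
    (hcontr : ∀ σ ∈ C, ContractionIsSimplicial C σ) : IsFlag C := by
  intro τ
  induction τ using Finset.strongInduction with
  | H τ ih =>
    intro hne hpairs
    rcases hne.exists_eq_singleton_or_nontrivial with ⟨a, rfl⟩ | ⟨a, ha, b, hb, hab⟩
    · simpa using hpairs a (Finset.mem_singleton_self a) a (Finset.mem_singleton_self a)
    have hedge := hpairs a ha b hb
    have herase : ∀ c ∈ τ, ∀ d ∈ τ, d ≠ c → τ.erase c ∈ C := fun c hc d hd hdc =>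
      ih _ (Finset.erase_ssubset hc) ⟨d, Finset.mem_erase.mpr ⟨hdc, hd⟩⟩
        fun x hx y hy => hpairs x (Finset.mem_of_mem_erase hx) y (Finset.mem_of_mem_erase hy)
    exact mem_of_erase_mem_of_contractionIsSimplicial hab ha hb (hcontr _ hedge)
      (herase a ha b hb hab.symm) (herase b hb a ha hab)

/-- C is flag iff every contraction C/σ is a simplicial complex, i.e. any
two faces of C mapping to cells of C/σ with the same vertex set (same difference with σ,
and both meeting σ or both disjoint from σ) are glued, i.e. span a common face of C. -/
theorem stmt4 (C : Set (Finset V)) (hC : IsComplex C) :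
    IsFlag C ↔ ∀ σ ∈ C, ∀ τ₁ ∈ C, ∀ τ₂ ∈ C,
      τ₁ \ σ = τ₂ \ σ → ((τ₁ ∩ σ).Nonempty ↔ (τ₂ ∩ σ).Nonempty) → τ₁ ∪ τ₂ ∈ C :=
  ⟨fun hflag _ hσ => hflag.contractionIsSimplicial hC hσ, isFlag_of_contractionIsSimplicial⟩
end

section
/- Every flag pure simplicial complex without boundary has the missing edge exchange property. -/
variable {V : Type*} [DecidableEq V]

/-! Let `σ` be a ridge, `v ∉ σ` with `σ ∪ {v}` a facet. Since there is no boundary, `σ` lies in a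
second facet, which by purity is `σ ∪ {u}` for some `u ≠ v`. If `{u, v}` were an edge, every pair
of vertices of `σ ∪ {u, v}` would span a face, so by flagness `σ ∪ {u, v}` would be a face strictly
containing the facet `σ ∪ {v}`. -/

variable {C : Set (Finset V)}

open Finset

theorem exists_isFacet_insert_ne {d : ℕ} (hpure : IsPure C d) (hnb : NoBoundary C)
    {σ : Finset V} (hσ : σ ∈ C) (hcard : σ.card = d) (v : V) :
    ∃ u ∉ σ, u ≠ v ∧ IsFacet C (insert u σ) := by
  have hσ' : ¬ IsFacet C σ := fun h => by
    have := hpure.2 σ h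
    omega
  obtain ⟨A, B, hA, hB, hAB, hσA, hσB⟩ := hnb σ hσ hσ'
  have facet_eq_insert : ∀ F, IsFacet C F → σ ⊆ F → ∃ u ∉ σ, insert u σ = F := fun F hF hσF =>
    exists_eq_insert_iff.mpr ⟨hσF, by rw [hpure.2 F hF, hcard]⟩
  obtain ⟨a, ha, rfl⟩ := facet_eq_insert A hA hσA
  obtain ⟨b, hb, rfl⟩ := facet_eq_insert B hB hσB
  by_cases hav : a = v
  · refine ⟨b, hb, ?_, hB⟩
    rintro rfl
    exact hAB (by rw [hav])
  · exact ⟨a, ha, hav, hA⟩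

theorem IsFlag.union_mem (hflag : IsFlag C) (hC : IsComplex C) {s t : Finset V} (hs : s ∈ C)
    (ht : t ∈ C) (hst : ∀ a ∈ s, a ∉ t → ∀ b ∈ t, b ∉ s → ({a, b} : Finset V) ∈ C) :
    s ∪ t ∈ C := by
  rcases (s ∪ t).eq_empty_or_nonempty with h | hne
  · rw [h]
    exact hC s hs ∅ (empty_subset s)
  refine hflag _ hne fun a ha b hb => ?_
  have edge_of_mem : ∀ r ∈ C, a ∈ r → b ∈ r → ({a, b} : Finset V) ∈ C := fun r hr har hbr =>
    hC r hr _ (insert_subset har (singleton_subset_iff.mpr hbr))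
  rw [mem_union] at ha hb
  by_cases hab_s : a ∈ s ∧ b ∈ s
  · exact edge_of_mem s hs hab_s.1 hab_s.2
  by_cases hab_t : a ∈ t ∧ b ∈ t
  · exact edge_of_mem t ht hab_t.1 hab_t.2
  by_cases has : a ∈ s
  · exact hst a has (by tauto) b (by tauto) (by tauto)
  · rw [pair_comm]
    exact hst b (by tauto) (by tauto) a (by tauto) has

theorem IsFlag.pair_not_mem_of_isFacet_insert (hflag : IsFlag C) (hC : IsComplex C)
    {σ : Finset V} {u v : V} (hu : insert u σ ∈ C) (hv : IsFacet C (insert v σ))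
    (hu' : u ∉ insert v σ) : ({u, v} : Finset V) ∉ C := by
  intro huv
  have hunion : insert u σ ∪ insert v σ ∈ C := by
    refine hflag.union_mem hC hu hv.1 fun a ha ha' b hb hb' => ?_
    have hau : a = u := by simp_all
    have hbv : b = v := by simp_all
    rwa [hau, hbv]
  have hsub : insert u σ ⊆ insert v σ :=
    union_eq_right.mp (hv.2 _ hunion subset_union_right)
  exact hu' (hsub (mem_insert_self u σ))

/-- every flag pure complex without boundary has the
missing edge exchange property. -/
theorem stmt5 (C : Set (Finset V)) (d : ℕ) (hC : IsComplex C)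
    (hflag : IsFlag C) (hpure : IsPure C d) (hnb : NoBoundary C) :
    MEEP C d := by
  intro σ hσ hcard v _ hfac
  obtain ⟨u, hu, huv, hfac'⟩ := exists_isFacet_insert_ne hpure hnb hσ hcard v
  refine ⟨u, huv, hu, hfac', hflag.pair_not_mem_of_isFacet_insert hC hfac'.1 hfac ?_⟩
  simp [huv, hu]
end

section
/- If a pure simplicial complex C has the missing edge exchange property, then for every k < dim(C), the k-skeleton of C also has the missing edge exchange property. -/
/-!
Extend the skeleton facet `σ ∪ {v}` to a facet `A` of `C`. The exchange property of `C`
at the ridge `A \ {v}` yields a facet `(A \ {v}) ∪ {u}` with `{u, v}` not an edge, and its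
subface `σ ∪ {u}` has `k + 1` vertices, so it is a facet of the `k`-skeleton.
-/

variable {V : Type*} [DecidableEq V]

def skeleton {α : Type*} (C : Set (Finset α)) (k : ℕ) : Set (Finset α) :=
  {σ ∈ C | σ.card ≤ k + 1}

theorem isFacet_skeleton_of_card_eq {α : Type*} {C : Set (Finset α)} {k : ℕ} {τ : Finset α}
    (hτ : τ ∈ C) (hcard : τ.card = k + 1) : IsFacet (skeleton C k) τ :=
  ⟨⟨hτ, hcard.le⟩, fun _ hB hτB =>
    (Finset.eq_of_subset_of_card_le hτB (hcard ▸ hB.2)).symm⟩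

theorem MEEP.exists_exchange_of_mem {C : Set (Finset V)} {d : ℕ} (hmeep : MEEP C d)
    (hC : IsComplex C) (hpure : IsPure C d) {τ : Finset V} (hτ : τ ∈ C) {v : V}
    (hv : v ∈ τ) :
    ∃ u, u ≠ v ∧ u ∉ τ ∧ insert u (τ.erase v) ∈ C ∧ ({u, v} : Finset V) ∉ C := by
  obtain ⟨A, hA, hτA⟩ := hpure.1 τ hτ
  have hvA : v ∈ A := hτA hv
  have hridge_card : (A.erase v).card = d := by
    rw [Finset.card_erase_of_mem hvA, hpure.2 A hA, Nat.add_sub_cancel]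
  obtain ⟨u, huv, huA, hu, hedge⟩ :=
    hmeep _ (hC A hA.1 _ (A.erase_subset v)) hridge_card v (A.notMem_erase v)
      (by rwa [Finset.insert_erase hvA])
  have huτ : u ∉ τ := fun h => huA (Finset.mem_erase.2 ⟨huv, hτA h⟩)
  have hface : insert u (τ.erase v) ⊆ insert u (A.erase v) :=
    Finset.insert_subset_insert u (Finset.erase_subset_erase v hτA)
  exact ⟨u, huv, huτ, hC _ hu.1 _ hface, hedge⟩

theorem stmt6_general (C : Set (Finset V)) (d k : ℕ) (hC : IsComplex C)
    (hpure : IsPure C d) (hmeep : MEEP C d) :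
    MEEP {σ ∈ C | σ.card ≤ k + 1} k := by
  intro σ _ hcard v hv hfacet
  obtain ⟨u, huv, huvσ, hface, hedge⟩ :=
    hmeep.exists_exchange_of_mem hC hpure hfacet.1.1 (Finset.mem_insert_self v σ)
  rw [Finset.erase_insert hv] at hface
  have huσ : u ∉ σ := fun h => huvσ (Finset.mem_insert_of_mem h)
  refine ⟨u, huv, huσ, isFacet_skeleton_of_card_eq hface ?_, fun h => hedge h.1⟩
  rw [Finset.card_insert_of_notMem huσ, hcard]

/-- the missing edge exchange property passes to skeleta. -/
theorem stmt6 (C : Set (Finset V)) (d k : ℕ) (hC : IsComplex C)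
    (hpure : IsPure C d) (hmeep : MEEP C d) (hk : k < d) :
    MEEP {σ ∈ C | σ.card ≤ k + 1} k :=
  stmt6_general C d k hC hpure hmeep
end

section
/- Every dual pair in a flag 1-dimensional simplicial complex D (a simple graph with no triangles among its edges, viewed as a complex) is, up to isomorphism, one of: (∅, D); (⟨v⟩, ⟨v⟩) for a vertex v; (⟨u,v⟩, ⟨uv⟩) for an edge uv; or (⟨uv, wx⟩, ⟨vw, ux⟩) for an induced 4-cycle u,v,w,x. -/
/-!
A one-dimensional flag complex is a triangle-free graph, and each side of a dual pair meets every
member of the other. If `U₁` contains a vertex `v`, every member of `U₂` contains `v`. Either all of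
`U₁` does too, and both sides are the star of `v`; or some member of `U₁` avoids `v`, each member
of `U₂` is then an edge from `v` into it, and two such edges would close a triangle, so `U₂` is a
single edge `va` and `U₁ = ⟨v, a⟩`. If neither side contains a vertex, both consist of edges. For
`ab ∈ U₁` the vertex `a` is not in `U₁ = U₂*`, so some edge `bd ∈ U₂` avoids `a`; likewise some
`ac ∈ U₂` avoids `b`, and some member of `U₁`, necessarily `cd`, avoids `a`. Triangle-freeness rules
out the chords `ad` and `bc`, so `a b d c` is an induced 4-cycle, and an edge meeting two opposite
sides of it is one of the other two.
-/

variable {V : Type*} [DecidableEq V]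

open Finset

set_option linter.unusedSectionVars false

def TriangleFree (D : Set (Finset V)) : Prop :=
  ∀ ⦃a b c : V⦄, a ≠ b → a ≠ c → b ≠ c →
    ({a, b} : Finset V) ∈ D → ({a, c} : Finset V) ∈ D → ({b, c} : Finset V) ∉ D

def IsDualPair (D U₁ U₂ : Set (Finset V)) : Prop :=
  U₁ = dualSet D U₂ ∧ U₂ = dualSet D U₁

section Faces

variable {D : Set (Finset V)} {σ : Finset V} {x y z w : V}

lemma inter_singleton_nonempty_iff : (σ ∩ {x}).Nonempty ↔ x ∈ σ := by
  simp [Finset.Nonempty]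

lemma inter_pair_nonempty_iff : (σ ∩ {x, y}).Nonempty ↔ x ∈ σ ∨ y ∈ σ := by
  simp [Finset.Nonempty, and_or_left, exists_or]

lemma IsComplex.pair_mem_s7 (hD : IsComplex D) (hσ : σ ∈ D) (hx : x ∈ σ) (hy : y ∈ σ) :
    ({x, y} : Finset V) ∈ D :=
  hD σ hσ _ (by simp [insert_subset_iff, hx, hy])

lemma eq_pair_of_card_le_two (hσ : σ.card ≤ 2) (hxy : x ≠ y) (hx : x ∈ σ) (hy : y ∈ σ) :
    σ = {x, y} :=
  (eq_of_subset_of_card_le (by simp [insert_subset_iff, hx, hy])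
    (by rwa [card_pair hxy])).symm

lemma exists_eq_pair_of_card_eq_two (hσ : σ.card = 2) (hx : x ∈ σ) :
    ∃ y, y ≠ x ∧ σ = {x, y} := by
  obtain ⟨a, b, hab, rfl⟩ := card_eq_two.1 hσ
  simp only [mem_insert, mem_singleton] at hx
  rcases hx with rfl | rfl
  · exact ⟨b, hab.symm, rfl⟩
  · exact ⟨a, hab, pair_comm _ _⟩

lemma isFacet_of_card_eq_two (hdim : ∀ σ ∈ D, σ.card ≤ 2) (hσ : σ ∈ D) (h2 : σ.card = 2) :
    IsFacet D σ :=
  ⟨hσ, fun _ hτ hστ => (eq_of_subset_of_card_le hστ (h2 ▸ hdim _ hτ)).symm⟩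

lemma triangleFree_of_isFlag (hD : IsComplex D) (hdim : ∀ σ ∈ D, σ.card ≤ 2)
    (hflag : IsFlag D) : TriangleFree D := by
  intro a b c hab hac hbc hab' hac' hbc'
  have hvert : ∀ v ∈ ({a, b, c} : Finset V), ({v, v} : Finset V) ∈ D := by
    intro v hv
    rcases mem_insert.1 hv with rfl | hv
    · exact hD.pair_mem_s7 hab' (mem_insert_self _ _) (mem_insert_self _ _)
    · exact hD.pair_mem_s7 hbc' hv hv
  have htri : ({a, b, c} : Finset V) ∈ D := by
    refine hflag _ (insert_nonempty _ _) fun u hu v hv => ?_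
    simp only [mem_insert, mem_singleton] at hu hv
    rcases hu with rfl | rfl | rfl <;> rcases hv with rfl | rfl | rfl <;>
      first
      | exact hvert _ (by simp)
      | assumption
      | rwa [pair_comm]
  have := hdim _ htri
  rw [card_insert_of_notMem (by simp [hab, hac]), card_pair hbc] at this
  omega

/-- An edge meeting two opposite sides `xy` and `zw` of a 4-cycle `x z w y` without chords
`xw`, `yz` is one of the other two sides. -/
lemma eq_pair_or_eq_pair_of_mem (hD : IsComplex D) (hdim : ∀ σ ∈ D, σ.card ≤ 2) (hσ : σ ∈ D)
    (hxz : x ≠ z) (hyw : y ≠ w) (hxw : ({x, w} : Finset V) ∉ D)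
    (hyz : ({y, z} : Finset V) ∉ D) (hxy : x ∈ σ ∨ y ∈ σ) (hzw : z ∈ σ ∨ w ∈ σ) :
    σ = {x, z} ∨ σ = {y, w} := by
  rcases hxy with hx | hy <;> rcases hzw with hz | hw
  · exact Or.inl (eq_pair_of_card_le_two (hdim σ hσ) hxz hx hz)
  · exact absurd (hD.pair_mem_s7 hσ hx hw) hxw
  · exact absurd (hD.pair_mem_s7 hσ hy hz) hyz
  · exact Or.inr (eq_pair_of_card_le_two (hdim σ hσ) hyw hy hw)

end Faces

section Duals

variable {D U U₁ U₂ : Set (Finset V)} {σ τ : Finset V} {v x y : V}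

lemma dualSet_empty : dualSet D ∅ = D := by
  ext σ; simp [dualSet]

lemma empty_notMem_dualSet (hU : U.Nonempty) : ∅ ∉ dualSet D U := by
  obtain ⟨τ, hτ⟩ := hU
  exact fun h => by simpa using h.2 τ hτ

lemma singleton_mem_dualSet_iff :
    {v} ∈ dualSet D U ↔ {v} ∈ D ∧ ∀ τ ∈ U, v ∈ τ := by
  simp [dualSet, Finset.Nonempty]

lemma mem_upperGen_singleton : σ ∈ upperGen D {{v}} ↔ σ ∈ D ∧ v ∈ σ := by
  simp [upperGen]

lemma dualSet_singleton_pair : dualSet D {{x, y}} = upperGen D {{x}, {y}} := by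
  ext σ; simp [dualSet, upperGen, inter_pair_nonempty_iff, and_or_left]

lemma upperGen_eq_self {S : Set (Finset V)} (hS : ∀ σ ∈ S, IsFacet D σ) : upperGen D S = S := by
  ext σ
  refine ⟨fun ⟨hσ, τ, hτ, hτσ⟩ => ?_, fun hσ => ⟨(hS σ hσ).1, σ, hσ, subset_rfl⟩⟩
  rwa [(hS τ hτ).2 σ hσ hτσ]

lemma upperGen_singleton_subset_dualSet (h : ∀ τ ∈ U, v ∈ τ) :
    upperGen D {{v}} ⊆ dualSet D U :=
  fun _ hσ => ⟨(mem_upperGen_singleton.1 hσ).1,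
    fun τ hτ => ⟨v, mem_inter.2 ⟨(mem_upperGen_singleton.1 hσ).2, h τ hτ⟩⟩⟩

lemma mem_of_mem_dualSet (hσ : σ ∈ dualSet D U) (hv : {v} ∈ U) : v ∈ σ :=
  inter_singleton_nonempty_iff.1 (hσ.2 _ hv)

namespace IsDualPair

lemma symm (h : IsDualPair D U₁ U₂) : IsDualPair D U₂ U₁ := ⟨h.2, h.1⟩

lemma subset_left (h : IsDualPair D U₁ U₂) : U₁ ⊆ D := h.1 ▸ fun _ hσ => hσ.1

lemma inter_nonempty (h : IsDualPair D U₁ U₂) (hσ : σ ∈ U₁) (hτ : τ ∈ U₂) :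
    (σ ∩ τ).Nonempty :=
  (h.1 ▸ hσ : σ ∈ dualSet D U₂).2 τ hτ

lemma exists_notMem (h : IsDualPair D U₁ U₂) (hvD : {v} ∈ D) (hv : {v} ∉ U₁) :
    ∃ τ ∈ U₂, v ∉ τ := by
  rw [h.1, singleton_mem_dualSet_iff] at hv
  by_contra! hall
  exact hv ⟨hvD, hall⟩

lemma card_eq_two (h : IsDualPair D U₁ U₂) (hdim : ∀ σ ∈ D, σ.card ≤ 2) (hU₂ : U₂.Nonempty)
    (hs : ∀ v, {v} ∉ U₁) (hσ : σ ∈ U₁) : σ.card = 2 := by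
  have hne : σ ≠ ∅ := fun h0 => empty_notMem_dualSet hU₂ (h.1 ▸ h0 ▸ hσ)
  have hsingle : σ.card ≠ 1 := fun h1 => by
    obtain ⟨v, rfl⟩ := card_eq_one.1 h1
    exact hs v hσ
  have := hdim σ (h.subset_left hσ)
  have := card_ne_zero.2 (nonempty_iff_ne_empty.2 hne)
  omega

lemma isFacet (h : IsDualPair D U₁ U₂) (hdim : ∀ σ ∈ D, σ.card ≤ 2)
    (hU₁ : ∀ σ ∈ U₁, σ.card = 2) (hσ : σ ∈ U₁) : IsFacet D σ :=
  isFacet_of_card_eq_two hdim (h.subset_left hσ) (hU₁ σ hσ)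

lemma eq_upperGen_singleton (h : IsDualPair D U₁ U₂) (hv : {v} ∈ U₁) (hall : ∀ τ ∈ U₁, v ∈ τ) :
    U₁ = upperGen D {{v}} ∧ U₂ = upperGen D {{v}} := by
  have hU₂ : U₂ = upperGen D {{v}} := by
    refine subset_antisymm (fun σ hσ => ?_) (h.2 ▸ upperGen_singleton_subset_dualSet hall)
    exact mem_upperGen_singleton.2 ⟨h.symm.subset_left hσ, mem_of_mem_dualSet (h.2 ▸ hσ) hv⟩
  refine ⟨subset_antisymm (fun τ hτ => ?_) ?_, hU₂⟩
  · exact mem_upperGen_singleton.2 ⟨h.subset_left hτ, hall τ hτ⟩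
  · exact h.1 ▸ upperGen_singleton_subset_dualSet
      fun σ hσ => (mem_upperGen_singleton.1 (hU₂ ▸ hσ)).2

lemma exists_eq_singleton_pair (h : IsDualPair D U₁ U₂) (hD : IsComplex D)
    (hdim : ∀ σ ∈ D, σ.card ≤ 2) (htri : TriangleFree D) (hU₂ : U₂.Nonempty) (hv : {v} ∈ U₁)
    (hτ : τ ∈ U₁) (hvτ : v ∉ τ) : ∃ a, a ≠ v ∧ U₂ = {{v, a}} := by
  have hedge : ∀ σ ∈ U₂, ∃ a ∈ τ, a ≠ v ∧ σ = {v, a} := by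
    intro σ hσ
    obtain ⟨a, ha⟩ := h.inter_nonempty hτ hσ
    rw [mem_inter] at ha
    have hav : a ≠ v := fun hav => hvτ (hav ▸ ha.1)
    exact ⟨a, ha.1, hav, eq_pair_of_card_le_two (hdim σ (h.symm.subset_left hσ)) hav.symm
      (mem_of_mem_dualSet (h.2 ▸ hσ) hv) ha.2⟩
  obtain ⟨σ₀, hσ₀⟩ := hU₂
  obtain ⟨a, haτ, hav, rfl⟩ := hedge σ₀ hσ₀
  refine ⟨a, hav, Set.eq_singleton_iff_unique_mem.2 ⟨hσ₀, fun σ hσ => ?_⟩⟩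
  obtain ⟨b, hbτ, hbv, rfl⟩ := hedge σ hσ
  obtain rfl | hab := eq_or_ne a b
  · rfl
  exact absurd (hD.pair_mem_s7 (h.subset_left hτ) haτ hbτ)
    (htri hav.symm hbv.symm hab (h.symm.subset_left hσ₀) (h.symm.subset_left hσ))

lemma eq_star_or_eq_edge_of_singleton_mem (h : IsDualPair D U₁ U₂) (hD : IsComplex D)
    (hdim : ∀ σ ∈ D, σ.card ≤ 2) (htri : TriangleFree D) (hU₂ : U₂.Nonempty) (hv : {v} ∈ U₁) :
    (∃ v : V, ({v} : Finset V) ∈ D ∧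
      U₁ = upperGen D {({v} : Finset V)} ∧ U₂ = upperGen D {({v} : Finset V)}) ∨
    (∃ u v : V, u ≠ v ∧ ({u, v} : Finset V) ∈ D ∧
      U₁ = upperGen D {({u} : Finset V), {v}} ∧ U₂ = upperGen D {({u, v} : Finset V)}) := by
  by_cases hall : ∀ τ ∈ U₁, v ∈ τ
  · exact Or.inl ⟨v, h.subset_left hv, h.eq_upperGen_singleton hv hall⟩
  obtain ⟨τ, hτ, hvτ⟩ : ∃ τ ∈ U₁, v ∉ τ := by simpa using hall
  obtain ⟨a, hav, hU₂⟩ := h.exists_eq_singleton_pair hD hdim htri hU₂ hv hτ hvτ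
  have hvaD : ({v, a} : Finset V) ∈ D := h.symm.subset_left (hU₂ ▸ rfl)
  refine Or.inr ⟨v, a, hav.symm, hvaD, by rw [h.1, hU₂, dualSet_singleton_pair], ?_⟩
  rw [hU₂, upperGen_eq_self]
  simpa using isFacet_of_card_eq_two hdim hvaD (card_pair hav.symm)

lemma exists_pair_mem_of_pair_mem (h : IsDualPair D U₁ U₂) (hD : IsComplex D)
    (hU₁ : ∀ σ ∈ U₁, σ.card = 2) (hU₂ : ∀ σ ∈ U₂, σ.card = 2) (hab : {x, y} ∈ U₁) :
    ∃ z, z ≠ x ∧ z ≠ y ∧ ({y, z} : Finset V) ∈ U₂ := by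
  have hxD : ({x} : Finset V) ∈ D := hD _ (h.subset_left hab) _ (by simp)
  obtain ⟨σ, hσ, hxσ⟩ := h.exists_notMem hxD fun hx => by simpa using hU₁ _ hx
  have hyσ : y ∈ σ :=
    (inter_pair_nonempty_iff.1 (h.symm.inter_nonempty hσ hab)).resolve_left hxσ
  obtain ⟨z, hzy, rfl⟩ := exists_eq_pair_of_card_eq_two (hU₂ σ hσ) hyσ
  exact ⟨z, fun hzx => hxσ (by simp [hzx]), hzy, hσ⟩

lemma exists_fourCycle (h : IsDualPair D U₁ U₂) (hD : IsComplex D)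
    (hdim : ∀ σ ∈ D, σ.card ≤ 2) (htri : TriangleFree D) (hU₁ : ∀ σ ∈ U₁, σ.card = 2)
    (hU₂ : ∀ σ ∈ U₂, σ.card = 2) (hne : U₁.Nonempty) :
    ∃ u v w x : V, [u, v, w, x].Nodup ∧
      ({u, v} : Finset V) ∈ D ∧ ({v, w} : Finset V) ∈ D ∧
      ({w, x} : Finset V) ∈ D ∧ ({u, x} : Finset V) ∈ D ∧
      ({u, w} : Finset V) ∉ D ∧ ({v, x} : Finset V) ∉ D ∧
      U₁ = upperGen D {({u, v} : Finset V), {w, x}} ∧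
      U₂ = upperGen D {({v, w} : Finset V), {u, x}} := by
  obtain ⟨τ, hτ⟩ := hne
  obtain ⟨a, b, hab, rfl⟩ := Finset.card_eq_two.1 (hU₁ τ hτ)
  obtain ⟨d, hda, hdb, hbd⟩ := h.exists_pair_mem_of_pair_mem hD hU₁ hU₂ hτ
  obtain ⟨c, hcb, hca, hac⟩ := h.exists_pair_mem_of_pair_mem hD hU₁ hU₂ (pair_comm a b ▸ hτ)
  have habD := h.subset_left hτ
  have hacD := h.symm.subset_left hac
  have hbdD := h.symm.subset_left hbd
  have hbc : ({b, c} : Finset V) ∉ D := htri hab hca.symm hcb.symm habD hacD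
  have had : ({a, d} : Finset V) ∉ D := fun had => htri hab hda.symm hdb.symm habD had hbdD
  have hcd : c ≠ d := fun hcd => hbc (hcd ▸ hbdD)
  have hU₁sub : ∀ σ ∈ U₁, σ = {a, b} ∨ σ = {c, d} := fun σ hσ =>
    eq_pair_or_eq_pair_of_mem hD hdim (h.subset_left hσ) hab hcd had (pair_comm b c ▸ hbc)
      (inter_pair_nonempty_iff.1 (h.inter_nonempty hσ hac))
      (inter_pair_nonempty_iff.1 (h.inter_nonempty hσ hbd))
  have hcdU : ({c, d} : Finset V) ∈ U₁ := by
    have haD : ({a} : Finset V) ∈ D := hD _ habD _ (by simp)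
    obtain ⟨σ, hσ, haσ⟩ := h.symm.exists_notMem haD fun ha => by simpa using hU₂ _ ha
    exact (hU₁sub σ hσ).resolve_left (fun hσab => haσ (by simp [hσab])) ▸ hσ
  have hU₁eq : U₁ = {{a, b}, {c, d}} :=
    subset_antisymm hU₁sub (Set.insert_subset_iff.2 ⟨hτ, Set.singleton_subset_iff.2 hcdU⟩)
  have hU₂eq : U₂ = {{a, c}, {b, d}} := by
    refine subset_antisymm (fun σ hσ => ?_)
      (Set.insert_subset_iff.2 ⟨hac, Set.singleton_subset_iff.2 hbd⟩)
    exact eq_pair_or_eq_pair_of_mem hD hdim (h.symm.subset_left hσ) hca.symm hdb.symm had hbc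
      (inter_pair_nonempty_iff.1 (h.symm.inter_nonempty hσ hτ))
      (inter_pair_nonempty_iff.1 (h.symm.inter_nonempty hσ hcdU))
  refine ⟨a, b, d, c, by simp [hab, hda.symm, hca.symm, hdb.symm, hcb.symm, hcd.symm], habD,
    hbdD, pair_comm c d ▸ h.subset_left hcdU, hacD, had, hbc, ?_, ?_⟩
  · rw [pair_comm d c, ← hU₁eq, upperGen_eq_self fun σ => h.isFacet hdim hU₁]
  · rw [Set.pair_comm, ← hU₂eq, upperGen_eq_self fun σ => h.symm.isFacet hdim hU₂]

end IsDualPair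

end Duals

/-- classification of dual pairs in a flag 1-dimensional complex. -/
theorem stmt7 (D : Set (Finset V)) (hD : IsComplex D)
    (hdim : ∀ σ ∈ D, σ.card ≤ 2) (hflag : IsFlag D)
    (U₁ U₂ : Set (Finset V))
    (h1 : U₁ = dualSet D U₂) (h2 : U₂ = dualSet D U₁) :
    ((U₁ = ∅ ∧ U₂ = D) ∨ (U₂ = ∅ ∧ U₁ = D)) ∨
    (∃ v : V, ({v} : Finset V) ∈ D ∧
      U₁ = upperGen D {({v} : Finset V)} ∧ U₂ = upperGen D {({v} : Finset V)}) ∨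
    (∃ u v : V, u ≠ v ∧ ({u, v} : Finset V) ∈ D ∧
      ((U₁ = upperGen D {({u} : Finset V), {v}} ∧ U₂ = upperGen D {({u, v} : Finset V)}) ∨
       (U₂ = upperGen D {({u} : Finset V), {v}} ∧ U₁ = upperGen D {({u, v} : Finset V)}))) ∨
    (∃ u v w x : V, [u, v, w, x].Nodup ∧
      ({u, v} : Finset V) ∈ D ∧ ({v, w} : Finset V) ∈ D ∧
      ({w, x} : Finset V) ∈ D ∧ ({u, x} : Finset V) ∈ D ∧
      ({u, w} : Finset V) ∉ D ∧ ({v, x} : Finset V) ∉ D ∧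
      ((U₁ = upperGen D {({u, v} : Finset V), {w, x}} ∧
        U₂ = upperGen D {({v, w} : Finset V), {u, x}}) ∨
       (U₂ = upperGen D {({u, v} : Finset V), {w, x}} ∧
        U₁ = upperGen D {({v, w} : Finset V), {u, x}}))) := by
  have h : IsDualPair D U₁ U₂ := ⟨h1, h2⟩
  have htri := triangleFree_of_isFlag hD hdim hflag
  rcases U₁.eq_empty_or_nonempty with hU₁ | hU₁
  · exact Or.inl (Or.inl ⟨hU₁, by rw [h2, hU₁, dualSet_empty]⟩)
  rcases U₂.eq_empty_or_nonempty with hU₂ | hU₂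
  · exact Or.inl (Or.inr ⟨hU₂, by rw [h1, hU₂, dualSet_empty]⟩)
  refine Or.inr ?_
  by_cases hs₁ : ∃ v, {v} ∈ U₁
  · obtain ⟨v, hv⟩ := hs₁
    rcases h.eq_star_or_eq_edge_of_singleton_mem hD hdim htri hU₂ hv with
      ⟨w, hw, e₁, e₂⟩ | ⟨u, w, huw, he, e₁, e₂⟩
    · exact Or.inl ⟨w, hw, e₁, e₂⟩
    · exact Or.inr (Or.inl ⟨u, w, huw, he, Or.inl ⟨e₁, e₂⟩⟩)
  by_cases hs₂ : ∃ v, {v} ∈ U₂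
  · obtain ⟨v, hv⟩ := hs₂
    rcases h.symm.eq_star_or_eq_edge_of_singleton_mem hD hdim htri hU₁ hv with
      ⟨w, hw, e₂, e₁⟩ | ⟨u, w, huw, he, e₂, e₁⟩
    · exact Or.inl ⟨w, hw, e₁, e₂⟩
    · exact Or.inr (Or.inl ⟨u, w, huw, he, Or.inr ⟨e₂, e₁⟩⟩)
  obtain ⟨u, v, w, x, hnd, huv, hvw, hwx, hux, huw, hvx, e₁, e₂⟩ :=
    h.exists_fourCycle hD hdim htri (fun _ => h.card_eq_two hdim hU₂ (not_exists.1 hs₁))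
      (fun _ => h.symm.card_eq_two hdim hU₁ (not_exists.1 hs₂)) hU₁
  exact Or.inr (Or.inr ⟨u, v, w, x, hnd, huv, hvw, hwx, hux, huw, hvx, Or.inl ⟨e₁, e₂⟩⟩)
end

section
/- Let C be a flag pure d-dimensional simplicial complex, F an intersecting family of facets of C, and A ∈ F. If B and C' are facets of C such that B ∩ A and C' ∩ A partition A (they are disjoint and their union is A), then at most one of B and C' belongs to F. -/
variable {V : Type*} [DecidableEq V]

namespace IsComplex

variable {C : Set (Finset V)}

theorem insert_mem_of_isFlag (hC : IsComplex C) (hflag : IsFlag C) {A : Finset V} (hA : A ∈ C)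
    {v : V} (hv : ∀ a ∈ insert v A, ({v, a} : Finset V) ∈ C) : insert v A ∈ C := by
  refine hflag _ (Finset.insert_nonempty v A) fun a ha b hb => ?_
  rcases Finset.mem_insert.mp ha with rfl | haA
  · exact hv b hb
  rcases Finset.mem_insert.mp hb with rfl | hbA
  · rw [Finset.pair_comm]
    exact hv a ha
  · exact hC.pair_mem hA haA hbA

/-- A common vertex of `B` and `B'` outside `A` would be adjacent to every vertex of `A`, so by
flagness it would extend the facet `A`. -/
theorem inter_subset_of_isFacet_of_subset_union (hC : IsComplex C) (hflag : IsFlag C)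
    {A B B' : Finset V} (hA : IsFacet C A) (hB : B ∈ C) (hB' : B' ∈ C) (hcover : A ⊆ B ∪ B') :
    B ∩ B' ⊆ A := by
  intro v hv
  obtain ⟨hvB, hvB'⟩ := Finset.mem_inter.mp hv
  by_contra hvA
  have hadj : ∀ a ∈ insert v A, ({v, a} : Finset V) ∈ C := by
    intro a ha
    rcases Finset.mem_insert.mp ha with rfl | ha
    · exact hC.pair_mem hB hvB hvB
    rcases Finset.mem_union.mp (hcover ha) with haB | haB'
    · exact hC.pair_mem hB hvB haB
    · exact hC.pair_mem hB' hvB' haB'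
  have hmax := hA.2 _ (hC.insert_mem_of_isFlag hflag hA.1 hadj) (Finset.subset_insert v A)
  exact hvA (hmax ▸ Finset.mem_insert_self v A)

end IsComplex

theorem stmt8_general (C : Set (Finset V)) (hC : IsComplex C) (hflag : IsFlag C)
    (F : Set (Finset V)) (hFfac : ∀ A ∈ F, IsFacet C A) (hFint : Intersecting F)
    (A : Finset V) (hA : A ∈ F)
    (B C' : Finset V)
    (hpart₁ : (B ∩ A) ∪ (C' ∩ A) = A) (hpart₂ : (B ∩ A) ∩ (C' ∩ A) = ∅) :
    ¬(B ∈ F ∧ C' ∈ F) := by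
  rintro ⟨hBF, hCF⟩
  have hcover : A ⊆ B ∪ C' := by
    rw [← hpart₁]
    exact Finset.union_subset_union Finset.inter_subset_left Finset.inter_subset_left
  have hBC'A : B ∩ C' ⊆ A := hC.inter_subset_of_isFacet_of_subset_union hflag (hFfac A hA)
    (hFfac B hBF).1 (hFfac C' hCF).1 hcover
  obtain ⟨v, hv⟩ := hFint B hBF C' hCF
  have hvA := hBC'A hv
  have hv_parts : v ∈ (B ∩ A) ∩ (C' ∩ A) :=
    Finset.mem_inter.mpr ⟨Finset.mem_inter.mpr ⟨Finset.mem_of_mem_inter_left hv, hvA⟩,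
      Finset.mem_inter.mpr ⟨Finset.mem_of_mem_inter_right hv, hvA⟩⟩
  simp [hpart₂] at hv_parts

/-- if B ∩ A and C' ∩ A partition the facet A of the intersecting family F,
then at most one of the facets B, C' lies in F. -/
theorem stmt8 (C : Set (Finset V)) (d : ℕ) (hC : IsComplex C) (hflag : IsFlag C)
    (hpure : IsPure C d)
    (F : Set (Finset V)) (hFfac : ∀ A ∈ F, IsFacet C A) (hFint : Intersecting F)
    (A : Finset V) (hA : A ∈ F)
    (B C' : Finset V) (hB : IsFacet C B) (hC' : IsFacet C C')
    (hpart₁ : (B ∩ A) ∪ (C' ∩ A) = A) (hpart₂ : (B ∩ A) ∩ (C' ∩ A) = ∅) :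
    ¬(B ∈ F ∧ C' ∈ F) :=
  stmt8_general C hC hflag F hFfac hFint A hA B C' hpart₁ hpart₂
end

section
/- Let C be a flag d-dimensional simplicial manifold (or more generally a flag d-complex where every ridge is in exactly two facets and vertex links are as in a manifold) and v a vertex of C. Then the number of facets containing v is at most half the total number of facets of C. -/
/-!
Map each facet `A ∋ v` to the other facet `B` on the ridge `A \ {v}`; it avoids `v`. If two facets
`A₁ ≠ A₂` of the star were sent to the same `B`, then `B = (A₁ \ {v}) ∪ (A₂ \ {v})`, so every vertex
of `B` is joined to `v` and flagness makes `B ∪ {v}` a face with `d + 2` vertices. Hence the star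
injects into its complement among the facets.
-/

variable {V : Type*} [DecidableEq V]

theorem Finset.union_eq_of_card_eq_add_one {α : Type*} [DecidableEq α] {s t u : Finset α}
    (hs : s ⊆ u) (ht : t ⊆ u) (hst : s ≠ t) (hcard : t.card = s.card)
    (hu : u.card = s.card + 1) : s ∪ t = u := by
  have hlt : s ⊂ s ∪ t := Finset.ssubset_iff_subset_ne.2 ⟨Finset.subset_union_left, fun h =>
    hst (Finset.eq_of_subset_of_card_le (Finset.union_eq_left.1 h.symm) hcard.ge).symm⟩
  refine Finset.eq_of_subset_of_card_le (Finset.union_subset hs ht) ?_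
  have := Finset.card_lt_card hlt
  omega

theorem IsPure.card_le {α : Type*} {C : Set (Finset α)} {d : ℕ} (hpure : IsPure C d)
    {σ : Finset α} (hσ : σ ∈ C) : σ.card ≤ d + 1 := by
  obtain ⟨A, hA, hσA⟩ := hpure.1 σ hσ
  exact hpure.2 A hA ▸ Finset.card_le_card hσA

theorem ncard_vertexStar_add_ncard_facets_notMem {α : Type*} [Finite α] (C : Set (Finset α))
    (v : α) :
    (vertexStar C v).ncard + {A | IsFacet C A ∧ v ∉ A}.ncard = {A | IsFacet C A}.ncard :=
  Set.ncard_inter_add_ncard_sdiff_eq_ncard {A | IsFacet C A} {A | v ∈ A}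

section

variable {C : Set (Finset V)} {d : ℕ}

theorem IsPure.card_erase (hpure : IsPure C d) {A : Finset V} (hA : IsFacet C A) {v : V}
    (hv : v ∈ A) : (A.erase v).card = d := by
  rw [Finset.card_erase_of_mem hv, hpure.2 A hA, Nat.add_sub_cancel]

theorem IsFlag.insert_mem (hflag : IsFlag C) (hC : IsComplex C) {v : V} {τ : Finset V}
    (hτ : τ ∈ C) (hv : {v} ∈ C) (hadj : ∀ b ∈ τ, ({v, b} : Finset V) ∈ C) :
    insert v τ ∈ C := by
  refine hflag _ (Finset.insert_nonempty v τ) fun a ha b hb => ?_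
  rcases Finset.mem_insert.1 ha with rfl | ha
  · rcases Finset.mem_insert.1 hb with hb | hb
    · simpa [hb] using hv
    · exact hadj b hb
  · rcases Finset.mem_insert.1 hb with hb | hb
    · rw [hb, Finset.pair_comm]
      exact hadj a ha
    · exact hC τ hτ _ (Finset.insert_subset ha (Finset.singleton_subset_iff.2 hb))

theorem exists_facet_erase_subset_notMem (hC : IsComplex C) (hpure : IsPure C d)
    (hridge : ∀ σ ∈ C, σ.card = d → {A | IsFacet C A ∧ σ ⊆ A}.ncard = 2)
    {v : V} {A : Finset V} (hA : A ∈ vertexStar C v) :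
    ∃ B, IsFacet C B ∧ A.erase v ⊆ B ∧ v ∉ B := by
  obtain ⟨hAf, hvA⟩ := hA
  have hσ : A.erase v ∈ C := hC A hAf.1 _ (Finset.erase_subset v A)
  obtain ⟨B, ⟨hBf, hσB⟩, hBA⟩ := Set.exists_ne_of_one_lt_ncard
    ((hridge _ hσ (hpure.card_erase hAf hvA)).symm ▸ one_lt_two) A
  refine ⟨B, hBf, hσB, fun hvB => hBA (hAf.2 B hBf.1 ?_)⟩
  rw [← Finset.insert_erase hvA]
  exact Finset.insert_subset hvB hσB

theorem eq_of_erase_subset_facet_of_notMem (hC : IsComplex C) (hflag : IsFlag C)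
    (hpure : IsPure C d) {v : V} {A₁ A₂ B : Finset V} (h₁ : A₁ ∈ vertexStar C v)
    (h₂ : A₂ ∈ vertexStar C v) (hB : IsFacet C B) (hvB : v ∉ B) (hB₁ : A₁.erase v ⊆ B)
    (hB₂ : A₂.erase v ⊆ B) : A₁ = A₂ := by
  by_contra hne
  have hunion : A₁.erase v ∪ A₂.erase v = B := by
    refine Finset.union_eq_of_card_eq_add_one hB₁ hB₂ (fun h => hne ?_) ?_ ?_
    · rw [← Finset.insert_erase h₁.2, ← Finset.insert_erase h₂.2, h]
    · rw [hpure.card_erase h₁.1 h₁.2, hpure.card_erase h₂.1 h₂.2]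
    · rw [hpure.2 B hB, hpure.card_erase h₁.1 h₁.2]
  have hedge : ∀ {A}, A ∈ vertexStar C v → ∀ b ∈ A.erase v, ({v, b} : Finset V) ∈ C :=
    fun hA b hb => hC _ hA.1.1 _
      (Finset.insert_subset hA.2 (Finset.singleton_subset_iff.2 (Finset.mem_of_mem_erase hb)))
  have hadj : ∀ b ∈ B, ({v, b} : Finset V) ∈ C := by
    intro b hb
    rw [← hunion] at hb
    rcases Finset.mem_union.1 hb with hb | hb
    · exact hedge h₁ b hb
    · exact hedge h₂ b hb
  have hcone : insert v B ∈ C :=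
    hflag.insert_mem hC hB.1 (hC A₁ h₁.1.1 _ (Finset.singleton_subset_iff.2 h₁.2)) hadj
  have hcard := hpure.card_le hcone
  rw [Finset.card_insert_of_notMem hvB, hpure.2 B hB] at hcard
  omega

end

theorem stmt11_general {V : Type*} [DecidableEq V] [Fintype V] (C : Set (Finset V)) (d : ℕ)
    (hC : IsComplex C) (hflag : IsFlag C) (hpure : IsPure C d)
    (hridge : ∀ σ ∈ C, σ.card = d → {A | IsFacet C A ∧ σ ⊆ A}.ncard = 2)
    (v : V) :
    2 * (vertexStar C v).ncard ≤ {A | IsFacet C A}.ncard := by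
  choose! opp hoppFacet hoppSub hoppNotMem using
    fun A (hA : A ∈ vertexStar C v) => exists_facet_erase_subset_notMem hC hpure hridge hA
  have hinj : Set.InjOn opp (vertexStar C v) := fun A₁ h₁ A₂ h₂ heq =>
    eq_of_erase_subset_facet_of_notMem hC hflag hpure h₁ h₂ (hoppFacet A₁ h₁) (hoppNotMem A₁ h₁)
      (hoppSub A₁ h₁) (heq ▸ hoppSub A₂ h₂)
  have hle : (vertexStar C v).ncard ≤ {A | IsFacet C A ∧ v ∉ A}.ncard :=
    Set.ncard_le_ncard_of_injOn opp (fun A hA => ⟨hoppFacet A hA, hoppNotMem A hA⟩) hinj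
  rw [← ncard_vertexStar_add_ncard_facets_notMem C v]
  omega

/-- in a flag pure d-complex in which every ridge lies in exactly two facets
(e.g. a flag closed d-manifold), each vertex star has at most half of all facets. -/
theorem stmt11 {V : Type*} [DecidableEq V] [Fintype V] (C : Set (Finset V)) (d : ℕ)
    (hC : IsComplex C) (hflag : IsFlag C) (hpure : IsPure C d)
    (hridge : ∀ σ ∈ C, σ.card = d → {A | IsFacet C A ∧ σ ⊆ A}.ncard = 2)
    (v : V) (hv : ({v} : Finset V) ∈ C) :
    2 * (vertexStar C v).ncard ≤ {A | IsFacet C A}.ncard :=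
  stmt11_general C d hC hflag hpure hridge v
end

section
/- Let C be a pure complex with m facets, D a pure complex with n facets, F an intersecting family of facets of C of maximum cardinality, and S a vertex star of D of maximum cardinality among vertex stars. If C is not pure-EKR (i.e., |F| is strictly larger than every vertex star of C) and n·|F| > m·|S|, then the simplicial join C ∗ D is not pure-EKR. -/
/-!
Products of facets are facets of the join, so `F ∗ facets(D)` is an intersecting family of
`|F| · n` facets of `C ∗ D`. A vertex star of the join is `star_C(v) ∗ facets(D)`, of size
`|star_C(v)| · n < |F| · n`, or `facets(C) ∗ star_D(w)`, of size `m · |star_D(w)| ≤ m · |S| < n · |F|`.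
-/

variable {V : Type*} [DecidableEq V]

/-- The simplicial join of complexes on disjoint vertex sets. -/
def Join {V W : Type*} [DecidableEq V] [DecidableEq W]
    (C : Set (Finset V)) (D : Set (Finset W)) : Set (Finset (V ⊕ W)) :=
  {ρ | ∃ σ ∈ C, ∃ τ ∈ D, ρ = σ.image Sum.inl ∪ τ.image Sum.inr}

open Finset

section Join

variable {V W : Type*}

lemma disjSum_subset_disjSum_iff {σ σ' : Finset V} {τ τ' : Finset W} :
    σ.disjSum τ ⊆ σ'.disjSum τ' ↔ σ ⊆ σ' ∧ τ ⊆ τ' := by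
  rw [disjSum_subset, toLeft_disjSum, toRight_disjSum]

lemma ncard_image2_disjSum (s : Set (Finset V)) (t : Set (Finset W)) :
    (Set.image2 disjSum s t).ncard = s.ncard * t.ncard := by
  rw [← Set.image_uncurry_prod,
    Set.ncard_image_of_injective _ Injective2_disjSum.uncurry, Set.ncard_prod]

variable [DecidableEq V] [DecidableEq W]

lemma mem_join_iff {C : Set (Finset V)} {D : Set (Finset W)} {ρ : Finset (V ⊕ W)} :
    ρ ∈ Join C D ↔ ∃ σ ∈ C, ∃ τ ∈ D, ρ = σ.disjSum τ := by
  have h (σ : Finset V) (τ : Finset W) : σ.image Sum.inl ∪ τ.image Sum.inr = σ.disjSum τ := by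
    ext (x | x) <;> simp
  simp only [Join, Set.mem_ofPred_eq, h]

lemma isFacet_join_disjSum {C : Set (Finset V)} {D : Set (Finset W)} {σ : Finset V}
    {τ : Finset W} (hσ : IsFacet C σ) (hτ : IsFacet D τ) :
    IsFacet (Join C D) (σ.disjSum τ) := by
  refine ⟨mem_join_iff.2 ⟨σ, hσ.1, τ, hτ.1, rfl⟩, fun ρ hρ hsub => ?_⟩
  obtain ⟨σ', hσ', τ', hτ', rfl⟩ := mem_join_iff.1 hρ
  obtain ⟨hσσ', hττ'⟩ := disjSum_subset_disjSum_iff.1 hsub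
  rw [hσ.2 σ' hσ' hσσ', hτ.2 τ' hτ' hττ']

lemma isFacet_join_iff {C : Set (Finset V)} {D : Set (Finset W)} {ρ : Finset (V ⊕ W)} :
    IsFacet (Join C D) ρ ↔ ∃ σ τ, IsFacet C σ ∧ IsFacet D τ ∧ ρ = σ.disjSum τ := by
  refine ⟨fun hρ => ?_, fun ⟨σ, τ, hσ, hτ, hρ⟩ => hρ ▸ isFacet_join_disjSum hσ hτ⟩
  obtain ⟨σ, hσ, τ, hτ, rfl⟩ := mem_join_iff.1 hρ.1
  have enlarge {σ' : Finset V} {τ' : Finset W} (hσ' : σ' ∈ C) (hτ' : τ' ∈ D)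
      (hsub : σ.disjSum τ ⊆ σ'.disjSum τ') : σ' = σ ∧ τ' = τ :=
    disjSum_inj.1 (hρ.2 _ (mem_join_iff.2 ⟨σ', hσ', τ', hτ', rfl⟩) hsub)
  refine ⟨σ, τ, ⟨hσ, fun σ' hσ' h => ?_⟩, ⟨hτ, fun τ' hτ' h => ?_⟩, rfl⟩
  · exact (enlarge hσ' hτ (disjSum_subset_disjSum_iff.2 ⟨h, subset_rfl⟩)).1
  · exact (enlarge hσ hτ' (disjSum_subset_disjSum_iff.2 ⟨subset_rfl, h⟩)).2

lemma Intersecting.image2_disjSum {F : Set (Finset V)} (hF : Intersecting F)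
    (t : Set (Finset W)) : Intersecting (Set.image2 disjSum F t) := by
  rintro _ ⟨σ, hσ, τ, -, rfl⟩ _ ⟨σ', hσ', τ', -, rfl⟩
  obtain ⟨v, hv⟩ := hF σ hσ σ' hσ'
  exact ⟨.inl v, by simpa using hv⟩

lemma vertexStar_join_inl (C : Set (Finset V)) (D : Set (Finset W)) (v : V) :
    vertexStar (Join C D) (.inl v) = Set.image2 disjSum (vertexStar C v) {τ | IsFacet D τ} := by
  ext ρ
  simp only [vertexStar, isFacet_join_iff, Set.mem_ofPred_eq, Set.mem_image2]
  constructor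
  · rintro ⟨⟨σ, τ, hσ, hτ, rfl⟩, hv⟩
    exact ⟨σ, ⟨hσ, inl_mem_disjSum.1 hv⟩, τ, hτ, rfl⟩
  · rintro ⟨σ, ⟨hσ, hv⟩, τ, hτ, rfl⟩
    exact ⟨⟨σ, τ, hσ, hτ, rfl⟩, inl_mem_disjSum.2 hv⟩

lemma vertexStar_join_inr (C : Set (Finset V)) (D : Set (Finset W)) (w : W) :
    vertexStar (Join C D) (.inr w) = Set.image2 disjSum {σ | IsFacet C σ} (vertexStar D w) := by
  ext ρ
  simp only [vertexStar, isFacet_join_iff, Set.mem_ofPred_eq, Set.mem_image2]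
  constructor
  · rintro ⟨⟨σ, τ, hσ, hτ, rfl⟩, hw⟩
    exact ⟨σ, hσ, τ, ⟨hτ, inr_mem_disjSum.1 hw⟩, rfl⟩
  · rintro ⟨σ, hσ, τ, ⟨hτ, hw⟩, rfl⟩
    exact ⟨⟨σ, τ, hσ, hτ, rfl⟩, inr_mem_disjSum.2 hw⟩

lemma singleton_mem_of_singleton_inl_mem_join {C : Set (Finset V)} {D : Set (Finset W)}
    {v : V} (h : {.inl v} ∈ Join C D) : {v} ∈ C := by
  obtain ⟨σ, hσ, τ, -, h⟩ := mem_join_iff.1 h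
  have hv : ({.inl v} : Finset (V ⊕ W)) = ({v} : Finset V).disjSum (∅ : Finset W) := by
    ext (x | x) <;> simp
  rw [hv, disjSum_inj] at h
  exact h.1 ▸ hσ

end Join

theorem stmt12_general {V W : Type*} [DecidableEq V] [DecidableEq W]
    (C : Set (Finset V)) (D : Set (Finset W))
    (m n : ℕ) (hm : {A | IsFacet C A}.ncard = m) (hn : {A | IsFacet D A}.ncard = n)
    (F : Set (Finset V)) (hFfac : ∀ A ∈ F, IsFacet C A) (hFint : Intersecting F)
    (w₀ : W)
    (hSmax : ∀ w : W, (vertexStar D w).ncard ≤ (vertexStar D w₀).ncard)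
    (hnotEKR : ∀ v : V, ({v} : Finset V) ∈ C → (vertexStar C v).ncard < F.ncard)
    (hineq : m * (vertexStar D w₀).ncard < n * F.ncard) :
    ¬ PureEKR (Join C D) := by
  intro hEKR
  have hG : ∀ ρ ∈ Set.image2 disjSum F {τ | IsFacet D τ}, IsFacet (Join C D) ρ := by
    rintro _ ⟨σ, hσ, τ, hτ, rfl⟩
    exact isFacet_join_disjSum (hFfac σ hσ) hτ
  obtain ⟨u, hu, hle⟩ := hEKR _ hG (hFint.image2_disjSum _)
  rw [ncard_image2_disjSum, hn] at hle
  cases u with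
  | inl v =>
    rw [vertexStar_join_inl, ncard_image2_disjSum, hn] at hle
    have hnpos : 0 < n := Nat.pos_of_ne_zero (by rintro rfl; simp at hineq)
    have hstar := hnotEKR v (singleton_mem_of_singleton_inl_mem_join hu)
    exact absurd hle (not_le.2 (Nat.mul_lt_mul_of_pos_right hstar hnpos))
  | inr w =>
    rw [vertexStar_join_inr, ncard_image2_disjSum, hm] at hle
    have hstar := Nat.mul_le_mul_left m (hSmax w)
    linarith

/-- if C is not pure-EKR, witnessed by a maximum intersecting family F,
S is a maximum vertex star of D, and n·|F| > m·|S|, then C ∗ D is not pure-EKR. -/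
theorem stmt12 {V W : Type*} [DecidableEq V] [DecidableEq W] [Fintype V] [Fintype W]
    (C : Set (Finset V)) (D : Set (Finset W)) (dC dD : ℕ)
    (hC : IsComplex C) (hD : IsComplex D) (hpC : IsPure C dC) (hpD : IsPure D dD)
    (m n : ℕ) (hm : {A | IsFacet C A}.ncard = m) (hn : {A | IsFacet D A}.ncard = n)
    (F : Set (Finset V)) (hFfac : ∀ A ∈ F, IsFacet C A) (hFint : Intersecting F)
    (hFmax : ∀ F' : Set (Finset V), (∀ A ∈ F', IsFacet C A) → Intersecting F' →
      F'.ncard ≤ F.ncard)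
    (w₀ : W) (hw₀ : ({w₀} : Finset W) ∈ D)
    (hSmax : ∀ w : W, (vertexStar D w).ncard ≤ (vertexStar D w₀).ncard)
    (hnotEKR : ∀ v : V, ({v} : Finset V) ∈ C → (vertexStar C v).ncard < F.ncard)
    (hineq : m * (vertexStar D w₀).ncard < n * F.ncard) :
    ¬ PureEKR (Join C D) :=
  stmt12_general C D m n hm hn F hFfac hFint w₀ hSmax hnotEKR hineq
end

section
/- For d ≥ 3, the boundary complex of the (d+1)-dimensional cross-polytope is not (d−1)-intersecting pure-EKR: a facet together with its d+1 neighbors (facets obtained by swapping one coordinate) forms a (d−1)-intersecting family of size d+2, while the star of any face of size d−1 contains only 4 facets. -/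
/-!
The facets of the boundary of the `n`-dimensional cross-polytope are the transversals
`{(i, f i)}` of the antipodal pairs, one for each vertex `f : Fin n → Bool` of the cube, and two
facets share `n - hammingDist f g` vertices. The closed Hamming ball of radius one around a vertex
of the cube has `n + 1` points, any two at distance at most `2`, so its transversals form an
`(n - 2)`-intersecting family. On the other hand a face `σ` fixes `f` on the `#σ` coordinates it
meets and leaves the others free, so its star has `2 ^ (n - #σ)` facets, which is `4` when
`#σ = n - 2`.
-/

variable {V : Type*} [DecidableEq V]

/-- The boundary complex of the d-dimensional cross-polytope: faces are the sets of
vertices containing no antipodal pair. -/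
def Cross (d : ℕ) : Set (Finset (Fin d × Bool)) :=
  {σ | ∀ i : Fin d, ¬(((i, true) : Fin d × Bool) ∈ σ ∧ ((i, false) : Fin d × Bool) ∈ σ)}

open Finset

lemma hammingDist_update_le_one {ι : Type*} [Fintype ι] [DecidableEq ι] {β : ι → Type*}
    [∀ i, DecidableEq (β i)] (f : ∀ i, β i) (i : ι) (b : β i) :
    hammingDist f (Function.update f i b) ≤ 1 := by
  refine (card_le_card fun j hj => ?_).trans (card_singleton i).le
  by_contra hji
  exact (mem_filter.mp hj).2 (Function.update_of_ne (Finset.mem_singleton.not.mp hji) b f).symm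

section CrossPolytope

variable {n : ℕ}

def transversal (f : Fin n → Bool) : Finset (Fin n × Bool) :=
  univ.image fun i => (i, f i)

@[simp]
lemma mem_transversal {f : Fin n → Bool} {p : Fin n × Bool} : p ∈ transversal f ↔ f p.1 = p.2 := by
  obtain ⟨i, b⟩ := p
  simp [transversal, eq_comm]

lemma subset_transversal_iff {σ : Finset (Fin n × Bool)} {f : Fin n → Bool} :
    σ ⊆ transversal f ↔ ∀ i, (i, !f i) ∉ σ := by
  constructor
  · intro h i hi
    simpa using h hi
  · rintro h ⟨i, b⟩ hib
    rw [mem_transversal]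
    by_contra hne
    obtain rfl : b = !f i := by cases b <;> simp_all
    exact h i hib

lemma transversal_subset_transversal_iff {f g : Fin n → Bool} :
    transversal f ⊆ transversal g ↔ f = g := by
  refine ⟨fun h => funext fun i => ?_, fun h => h ▸ subset_rfl⟩
  exact (mem_transversal.mp (@h (i, f i) (mem_transversal.mpr rfl))).symm

lemma transversal_injective : Function.Injective (transversal (n := n)) :=
  fun _ _ h => transversal_subset_transversal_iff.mp h.subset

lemma mem_cross_of_subset {σ τ : Finset (Fin n × Bool)} (hσ : σ ∈ Cross n) (hτ : τ ⊆ σ) :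
    τ ∈ Cross n :=
  fun i h => hσ i ⟨hτ h.1, hτ h.2⟩

lemma transversal_mem_cross (f : Fin n → Bool) : transversal f ∈ Cross n := by
  intro i
  simp

lemma mem_cross_iff_exists_subset_transversal {σ : Finset (Fin n × Bool)} :
    σ ∈ Cross n ↔ ∃ f, σ ⊆ transversal f := by
  refine ⟨fun hσ => ⟨fun i => decide ((i, true) ∈ σ), ?_⟩, fun ⟨f, hf⟩ =>
    mem_cross_of_subset (transversal_mem_cross f) hf⟩
  rw [subset_transversal_iff]
  intro i
  by_cases hi : (i, true) ∈ σ
  · simpa [hi] using fun h => hσ i ⟨hi, h⟩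
  · simp [hi]

lemma isFacet_cross_iff {A : Finset (Fin n × Bool)} :
    IsFacet (Cross n) A ↔ ∃ f, transversal f = A := by
  constructor
  · rintro ⟨hA, hmax⟩
    obtain ⟨f, hf⟩ := mem_cross_iff_exists_subset_transversal.mp hA
    exact ⟨f, hmax _ (transversal_mem_cross f) hf⟩
  · rintro ⟨f, rfl⟩
    refine ⟨transversal_mem_cross f, fun B hB hfB => ?_⟩
    obtain ⟨g, hg⟩ := mem_cross_iff_exists_subset_transversal.mp hB
    obtain rfl := transversal_subset_transversal_iff.mp (hfB.trans hg)
    exact hg.antisymm hfB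

lemma card_transversal_inter (f g : Fin n → Bool) :
    #(transversal f ∩ transversal g) = n - hammingDist f g := by
  have hinter : transversal f ∩ transversal g =
      ({i | f i = g i} : Finset (Fin n)).image fun i => (i, f i) := by
    ext ⟨i, b⟩
    simp only [mem_inter, mem_transversal, mem_image, mem_filter, mem_univ, true_and,
      Prod.mk.injEq]
    constructor
    · rintro ⟨rfl, h⟩
      exact ⟨i, h.symm, rfl, rfl⟩
    · rintro ⟨i, h, rfl, rfl⟩
      exact ⟨rfl, h.symm⟩
  have hsplit : #({i | f i = g i} : Finset (Fin n)) + hammingDist f g = n := by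
    simpa [hammingDist] using card_filter_add_card_filter_not (s := univ) fun i => f i = g i
  rw [hinter, card_image_of_injective _ fun i j h => (Prod.mk.inj h).1]
  omega

def flipNeighbourhood (f : Fin n → Bool) : Set (Fin n → Bool) :=
  insert f (Set.range fun i => Function.update f i (!f i))

lemma hammingDist_le_one_of_mem_flipNeighbourhood {f g : Fin n → Bool}
    (hg : g ∈ flipNeighbourhood f) : hammingDist f g ≤ 1 := by
  obtain rfl | ⟨i, rfl⟩ := hg
  · simp
  · exact hammingDist_update_le_one f i _

lemma hammingDist_le_two_of_mem_flipNeighbourhood {f g g' : Fin n → Bool}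
    (hg : g ∈ flipNeighbourhood f) (hg' : g' ∈ flipNeighbourhood f) : hammingDist g g' ≤ 2 :=
  calc hammingDist g g' ≤ hammingDist g f + hammingDist f g' := hammingDist_triangle _ _ _
    _ ≤ 1 + 1 := add_le_add
      (hammingDist_comm f g ▸ hammingDist_le_one_of_mem_flipNeighbourhood hg)
      (hammingDist_le_one_of_mem_flipNeighbourhood hg')

lemma ncard_flipNeighbourhood (f : Fin n → Bool) : (flipNeighbourhood f).ncard = n + 1 := by
  have hflip_injective : Function.Injective fun i => Function.update f i (!f i) := by
    intro i j hij
    by_contra hne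
    have := congrFun hij i
    simp [Function.update_of_ne hne] at this
  have hf_notMem : f ∉ Set.range fun i => Function.update f i (!f i) := by
    rintro ⟨i, hi⟩
    simpa using congrFun hi i
  rw [flipNeighbourhood, Set.ncard_insert_of_notMem hf_notMem,
    Set.ncard_range_of_injective hflip_injective, Nat.card_eq_fintype_card, Fintype.card_fin]

lemma injOn_fst_of_mem_cross {σ : Finset (Fin n × Bool)} (hσ : σ ∈ Cross n) :
    Set.InjOn Prod.fst (σ : Set (Fin n × Bool)) := by
  rintro ⟨i, b⟩ hp ⟨j, c⟩ hq (rfl : i = j)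
  cases b <;> cases c <;> first | rfl | exact absurd ⟨‹_›, ‹_›⟩ (hσ i)

lemma card_filter_subset_transversal {σ : Finset (Fin n × Bool)} (hσ : σ ∈ Cross n) :
    #({f | σ ⊆ transversal f} : Finset (Fin n → Bool)) = 2 ^ (n - #σ) := by
  set s := σ.image Prod.fst
  have hchoices : ∀ i, #({b | (i, !b) ∉ σ} : Finset Bool) = if i ∈ sᶜ then 2 else 1 := by
    intro i
    by_cases ht : (i, true) ∈ σ <;> by_cases hf : (i, false) ∈ σ
    · exact absurd ⟨ht, hf⟩ (hσ i)
    all_goals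
      simp [s, ht, hf, Fintype.univ_bool, filter_insert, filter_singleton, Bool.exists_bool]
  have hpi : ({f | σ ⊆ transversal f} : Finset (Fin n → Bool)) =
      Fintype.piFinset fun i => {b | (i, !b) ∉ σ} := by
    ext f
    simp [Fintype.mem_piFinset, subset_transversal_iff]
  rw [hpi, Fintype.card_piFinset, prod_congr rfl fun i _ => hchoices i, prod_ite_mem, univ_inter,
    prod_const, card_compl, Fintype.card_fin, card_image_of_injOn (injOn_fst_of_mem_cross hσ)]

lemma ncard_star_cross {σ : Finset (Fin n × Bool)} (hσ : σ ∈ Cross n) :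
    {A | IsFacet (Cross n) A ∧ σ ⊆ A}.ncard = 2 ^ (n - #σ) := by
  have hstar : {A | IsFacet (Cross n) A ∧ σ ⊆ A} =
      transversal '' ↑({f | σ ⊆ transversal f} : Finset (Fin n → Bool)) := by
    ext A
    simp only [isFacet_cross_iff, Set.mem_ofPred_eq, coe_filter, mem_univ, true_and,
      Set.mem_image]
    constructor
    · rintro ⟨⟨f, rfl⟩, hf⟩
      exact ⟨f, hf, rfl⟩
    · rintro ⟨f, hf, rfl⟩
      exact ⟨⟨f, rfl⟩, hf⟩
  rw [hstar, Set.ncard_image_of_injective _ transversal_injective, Set.ncard_coe_finset,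
    card_filter_subset_transversal hσ]

end CrossPolytope

/-- for d ≥ 3 the boundary of the (d+1)-cross-polytope is not
(d-1)-intersecting pure-EKR: there is a (d-1)-intersecting family of d+2 facets,
while the star of any face of size d-1 has exactly 4 facets. -/
theorem stmt14 (d : ℕ) (hd : 3 ≤ d) :
    (∃ F : Set (Finset (Fin (d + 1) × Bool)),
      (∀ A ∈ F, IsFacet (Cross (d + 1)) A) ∧
      (∀ A ∈ F, ∀ B ∈ F, d - 1 ≤ (A ∩ B).card) ∧ F.ncard = d + 2) ∧
    (∀ σ ∈ Cross (d + 1), σ.card = d - 1 →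
      {A | IsFacet (Cross (d + 1)) A ∧ σ ⊆ A}.ncard = 4) := by
  refine ⟨⟨transversal '' flipNeighbourhood fun _ => true, ?_, ?_, ?_⟩, fun σ hσ hcard => ?_⟩
  · rintro A ⟨f, -, rfl⟩
    exact isFacet_cross_iff.mpr ⟨f, rfl⟩
  · rintro A ⟨f, hf, rfl⟩ B ⟨g, hg, rfl⟩
    have hfg := hammingDist_le_two_of_mem_flipNeighbourhood hf hg
    rw [card_transversal_inter]
    omega
  · rw [Set.ncard_image_of_injective _ transversal_injective, ncard_flipNeighbourhood]
  · rw [ncard_star_cross hσ, hcard, show d + 1 - (d - 1) = 2 by omega]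
    norm_num
end

section
/- In the boundary complex of the 7-gon's associahedron (i.e., among triangulations of a convex heptagon, each determined by its 4 internal diagonals), there exists a 2-intersecting family of 5 triangulations that is not the set of triangulations containing a fixed pair of diagonals; moreover, no pair of noncrossing diagonals of the heptagon is contained in more than 5 triangulations. -/
variable {V : Type*} [DecidableEq V]

/-- A diagonal of the convex 7-gon: a pair of distinct, non-adjacent vertices. -/
def IsDiag (p : Finset (Fin 7)) : Prop :=
  ∃ a b : Fin 7, p = {a, b} ∧ b ≠ a ∧ b ≠ a + 1 ∧ a ≠ b + 1

/-- Two diagonals of the 7-gon cross: their endpoints interleave in cyclic order. -/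
def Crosses (p q : Finset (Fin 7)) : Prop :=
  ∃ a b c d : Fin 7, a < c ∧ c < b ∧ b < d ∧
    ((p = {a, b} ∧ q = {c, d}) ∨ (q = {a, b} ∧ p = {c, d}))

/-- A triangulation of the convex heptagon: a maximal set of pairwise noncrossing
internal diagonals. -/
def IsTriangulation (T : Finset (Finset (Fin 7))) : Prop :=
  (∀ p ∈ T, IsDiag p) ∧
  (∀ p ∈ T, ∀ q ∈ T, p ≠ q → ¬ Crosses p q) ∧
  (∀ p : Finset (Fin 7), IsDiag p → p ∉ T → ∃ q ∈ T, Crosses p q)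


/-!
A triangulation of the heptagon is exactly a maximal independent set of the crossing relation on
its 14 diagonals. The triangulations through two noncrossing diagonals `p`, `q` therefore
correspond to the maximal independent sets of the link of `{p, q}`, the diagonals crossing
neither; since `p` and `q` cut the heptagon into two triangles and a pentagon, or into a triangle
and two quadrilaterals, there are 5 or 4 of them, which a short enumeration confirms. For the
first claim, any two of the fan at a vertex and its four flips share at least two fan diagonals,
yet every diagonal is missing from one of the five, so they do not all contain a fixed pair.
-/

section MaximalIndep

variable {α β : Type*} {r : α → α → Prop} {r' : β → β → Prop} {U S A : Set α}

def IsMaximalIndep (r : α → α → Prop) (U S : Set α) : Prop :=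
  S ⊆ U ∧ S.Pairwise (fun a b => ¬ r a b) ∧ ∀ a ∈ U, a ∉ S → ∃ b ∈ S, r a b

def indepLink (r : α → α → Prop) (U A : Set α) : Set α :=
  {b ∈ U | b ∉ A ∧ ∀ a ∈ A, ¬ r b a}

theorem IsMaximalIndep.diff_indepLink (h : IsMaximalIndep r U S) (hA : A ⊆ S) :
    IsMaximalIndep r (indepLink r U A) (S \ A) := by
  obtain ⟨hSU, hS, hmax⟩ := h
  refine ⟨fun b ⟨hbS, hbA⟩ => ⟨hSU hbS, hbA, fun a ha => ?_⟩, hS.mono Set.sdiff_subset, ?_⟩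
  · exact hS hbS (hA ha) (ne_of_mem_of_not_mem ha hbA).symm
  · rintro b ⟨hbU, hbA, hbr⟩ hb
    obtain ⟨c, hcS, hbc⟩ := hmax b hbU fun hbS => hb ⟨hbS, hbA⟩
    exact ⟨c, ⟨hcS, fun hcA => hbr c hcA hbc⟩, hbc⟩

theorem ncard_setOf_isMaximalIndep_subset_le (hU : U.Finite) :
    {S | IsMaximalIndep r U S ∧ A ⊆ S}.ncard ≤
      {S | IsMaximalIndep r (indepLink r U A) S}.ncard := by
  refine Set.ncard_le_ncard_of_injOn (· \ A) (fun S hS => hS.1.diff_indepLink hS.2) ?_ ?_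
  · intro S hS S' hS' h
    rw [← Set.sdiff_union_of_subset hS.2, ← Set.sdiff_union_of_subset hS'.2]
    exact congrArg (· ∪ A) h
  · exact (hU.subset fun b hb => hb.1).finite_subsets.subset fun S hS => hS.1

theorem IsMaximalIndep.image {e : β → α} {U S : Set β}
    (hr : ∀ x ∈ U, ∀ y ∈ U, r (e x) (e y) ↔ r' x y) (h : IsMaximalIndep r' U S) :
    IsMaximalIndep r (e '' U) (e '' S) := by
  obtain ⟨hSU, hS, hmax⟩ := h
  refine ⟨Set.image_mono hSU, ?_, ?_⟩
  · rintro _ ⟨x, hx, rfl⟩ _ ⟨y, hy, rfl⟩ hne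
    rw [hr x (hSU hx) y (hSU hy)]
    exact hS hx hy fun hxy => hne (congrArg e hxy)
  · rintro _ ⟨x, hx, rfl⟩ hxS
    obtain ⟨y, hy, hxy⟩ := hmax x hx fun h => hxS ⟨x, h, rfl⟩
    exact ⟨e y, ⟨y, hy, rfl⟩, (hr x hx y (hSU hy)).2 hxy⟩

theorem IsMaximalIndep.preimage {e : β → α} {U : Set β} {T : Set α} (he : Set.InjOn e U)
    (hr : ∀ x ∈ U, ∀ y ∈ U, r (e x) (e y) ↔ r' x y) (h : IsMaximalIndep r (e '' U) T) :
    IsMaximalIndep r' U (U ∩ e ⁻¹' T) := by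
  obtain ⟨hTU, hT, hmax⟩ := h
  refine ⟨Set.inter_subset_left, ?_, ?_⟩
  · rintro x ⟨hxU, hxT⟩ y ⟨hyU, hyT⟩ hne
    rw [← hr x hxU y hyU]
    exact hT hxT hyT fun hxy => hne (he hxU hyU hxy)
  · intro x hxU hx
    obtain ⟨b, hbT, hxb⟩ := hmax (e x) ⟨x, hxU, rfl⟩ fun h => hx ⟨hxU, h⟩
    obtain ⟨y, hyU, rfl⟩ := hTU hbT
    exact ⟨y, ⟨hyU, hbT⟩, (hr x hxU y hyU).1 hxb⟩

end MaximalIndep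

-- Enumerating sublists of a list, rather than subsets of a `Finset`, keeps the kernel
-- computations below fast.

section Lists

variable {α : Type*} [DecidableEq α] (r : α → α → Prop) [DecidableRel r]

def indepLinkList (L A : List α) : List α :=
  L.filter fun b => !A.contains b && A.all fun a => !decide (r b a)

theorem setOf_mem_indepLinkList (L A : List α) :
    {b | b ∈ indepLinkList r L A} = indepLink r {b | b ∈ L} {a | a ∈ A} := by
  ext b
  simp [indepLinkList, indepLink]

def isMaximalIndepList (L l : List α) : Bool :=
  (l.all fun a => L.contains a) && (l.all fun a => l.all fun b => a == b || !decide (r a b)) &&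
    L.all fun a => l.contains a || l.any fun b => decide (r a b)

theorem isMaximalIndepList_iff {L l : List α} :
    isMaximalIndepList r L l = true ↔ IsMaximalIndep r {a | a ∈ L} {a | a ∈ l} := by
  simp [isMaximalIndepList, IsMaximalIndep, Set.Pairwise, Set.subset_def, or_iff_not_imp_left,
    and_assoc]

def maximalIndeps (L : List α) : List (List α) :=
  L.sublists.filter (isMaximalIndepList r L)

theorem ncard_setOf_isMaximalIndep_le_length (L : List α) :
    {S | IsMaximalIndep r {a | a ∈ L} S}.ncard ≤ (maximalIndeps r L).length := by
  classical
  have hfilter : ∀ S ⊆ {a | a ∈ L}, {a | a ∈ L.filter (· ∈ S)} = S := fun S hS => by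
    ext a
    simpa using fun ha => hS ha
  calc _ ≤ {l | l ∈ maximalIndeps r L}.ncard := by
        refine Set.ncard_le_ncard_of_injOn (fun S => L.filter (· ∈ S)) ?_ ?_ ?_
        · intro S hS
          refine List.mem_filter.2 ⟨List.mem_sublists.2 List.filter_sublist, ?_⟩
          rw [isMaximalIndepList_iff, hfilter S hS.1]
          exact hS
        · intro S hS S' hS' h
          rw [← hfilter S hS.1, ← hfilter S' hS'.1]
          exact congrArg (fun l : List α => {a | a ∈ l}) h
        · exact (maximalIndeps r L).finite_toSet
    _ = (maximalIndeps r L).toFinset.card := by rw [← Set.ncard_coe_finset, List.coe_toFinset]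
    _ ≤ _ := List.toFinset_card_le _

end Lists

section Heptagon

-- A diagonal `{a, b}` with `a < b` is encoded as the pair `(a, b)`; crossing becomes
-- `Interleaved`.

def edge (x : Fin 7 × Fin 7) : Finset (Fin 7) := {x.1, x.2}

def diagonalPairs : List (Fin 7 × Fin 7) :=
  [(0, 2), (0, 3), (0, 4), (0, 5), (1, 3), (1, 4), (1, 5), (1, 6), (2, 4), (2, 5), (2, 6),
    (3, 5), (3, 6), (4, 6)]

def Interleaved (x y : Fin 7 × Fin 7) : Prop :=
  x.1 < y.1 ∧ y.1 < x.2 ∧ x.2 < y.2 ∨ y.1 < x.1 ∧ x.1 < y.2 ∧ y.2 < x.2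

instance : DecidableRel Interleaved := fun _ _ => inferInstanceAs (Decidable (_ ∨ _))

theorem fst_lt_snd_of_mem_diagonalPairs : ∀ x ∈ diagonalPairs, x.1 < x.2 := by decide

theorem eq_of_edge_eq_pair {x : Fin 7 × Fin 7} {a b : Fin 7} (hx : x.1 < x.2) (hab : a < b)
    (h : edge x = {a, b}) : x = (a, b) := by
  have h' : ({x.1, x.2} : Set (Fin 7)) = {a, b} := by
    simpa [edge] using congrArg (fun s : Finset (Fin 7) => (s : Set (Fin 7))) h
  rcases Set.pair_eq_pair_iff.1 h' with ⟨h1, h2⟩ | ⟨h1, h2⟩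
  · exact Prod.ext h1 h2
  · exact absurd (h1 ▸ h2 ▸ hx) (lt_asymm hab)

theorem edge_injOn : Set.InjOn edge {x | x ∈ diagonalPairs} := fun x hx y hy h =>
  eq_of_edge_eq_pair (fst_lt_snd_of_mem_diagonalPairs x hx)
    (fst_lt_snd_of_mem_diagonalPairs y hy) h

theorem isDiag_iff {p : Finset (Fin 7)} : IsDiag p ↔ ∃ x ∈ diagonalPairs, edge x = p := by
  constructor
  · rintro ⟨a, b, rfl, h₁, h₂, h₃⟩
    have key : ∀ a b : Fin 7, b ≠ a → b ≠ a + 1 → a ≠ b + 1 →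
        (a, b) ∈ diagonalPairs ∨ (b, a) ∈ diagonalPairs := by decide
    rcases key a b h₁ h₂ h₃ with h | h
    · exact ⟨_, h, rfl⟩
    · exact ⟨_, h, Finset.pair_comm b a⟩
  · rintro ⟨x, hx, rfl⟩
    have key : ∀ x ∈ diagonalPairs, x.2 ≠ x.1 ∧ x.2 ≠ x.1 + 1 ∧ x.1 ≠ x.2 + 1 := by decide
    exact ⟨x.1, x.2, rfl, key x hx⟩

theorem crosses_edge_iff {x y : Fin 7 × Fin 7} (hx : x ∈ diagonalPairs)
    (hy : y ∈ diagonalPairs) : Crosses (edge x) (edge y) ↔ Interleaved x y := by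
  have hx' := fst_lt_snd_of_mem_diagonalPairs x hx
  have hy' := fst_lt_snd_of_mem_diagonalPairs y hy
  constructor
  · rintro ⟨a, b, c, d, hac, hcb, hbd, ⟨h₁, h₂⟩ | ⟨h₁, h₂⟩⟩
    · obtain rfl := eq_of_edge_eq_pair hx' (hac.trans hcb) h₁
      obtain rfl := eq_of_edge_eq_pair hy' (hcb.trans hbd) h₂
      exact Or.inl ⟨hac, hcb, hbd⟩
    · obtain rfl := eq_of_edge_eq_pair hy' (hac.trans hcb) h₁
      obtain rfl := eq_of_edge_eq_pair hx' (hcb.trans hbd) h₂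
      exact Or.inr ⟨hac, hcb, hbd⟩
  · rintro (⟨h₁, h₂, h₃⟩ | ⟨h₁, h₂, h₃⟩)
    · exact ⟨x.1, x.2, y.1, y.2, h₁, h₂, h₃, Or.inl ⟨rfl, rfl⟩⟩
    · exact ⟨y.1, y.2, x.1, x.2, h₁, h₂, h₃, Or.inr ⟨rfl, rfl⟩⟩

theorem isTriangulation_iff {T : Finset (Finset (Fin 7))} :
    IsTriangulation T ↔ IsMaximalIndep Crosses (edge '' {x | x ∈ diagonalPairs}) T := by
  have hdiag : {p | IsDiag p} = edge '' {x | x ∈ diagonalPairs} := by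
    ext p
    simp [isDiag_iff]
  rw [← hdiag]
  exact Iff.rfl

def toDiagonals (l : List (Fin 7 × Fin 7)) : Finset (Finset (Fin 7)) := l.toFinset.image edge

theorem isTriangulation_toDiagonals {l : List (Fin 7 × Fin 7)}
    (h : isMaximalIndepList Interleaved diagonalPairs l = true) :
    IsTriangulation (toDiagonals l) := by
  rw [isTriangulation_iff, toDiagonals, Finset.coe_image, List.coe_toFinset]
  exact ((isMaximalIndepList_iff Interleaved).1 h).image fun _ hx _ hy => crosses_edge_iff hx hy

theorem card_toDiagonals_inter {l l' : List (Fin 7 × Fin 7)} (hl : ∀ a ∈ l, a ∈ diagonalPairs)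
    (hl' : ∀ a ∈ l', a ∈ diagonalPairs) :
    (toDiagonals l ∩ toDiagonals l').card = (l.toFinset ∩ l'.toFinset).card := by
  have hinj : Set.InjOn edge (↑l.toFinset ∪ ↑l'.toFinset) :=
    edge_injOn.mono fun a ha => by
      simp only [List.coe_toFinset, Set.mem_union] at ha
      exact ha.elim (hl a) (hl' a)
  rw [toDiagonals, toDiagonals, ← Finset.image_inter_of_injOn _ _ hinj,
    Finset.card_image_of_injOn (hinj.mono (by rw [Finset.coe_inter]; exact inf_le_sup))]

theorem toFinset_eq_of_toDiagonals_eq {l l' : List (Fin 7 × Fin 7)}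
    (hl : ∀ a ∈ l, a ∈ diagonalPairs) (hl' : ∀ a ∈ l', a ∈ diagonalPairs)
    (h : toDiagonals l = toDiagonals l') : l.toFinset = l'.toFinset := by
  refine Finset.image_injOn_powerset_of_injOn (s := diagonalPairs.toFinset) ?_ ?_ ?_ h
  · simpa using edge_injOn
  · simpa [Set.subset_def] using hl
  · simpa [Set.subset_def] using hl'

theorem ncard_triangulations_le_ncard_isMaximalIndep {x y : Fin 7 × Fin 7} (hx : x ∈ diagonalPairs)
    (hy : y ∈ diagonalPairs) :
    {T | IsTriangulation T ∧ edge x ∈ T ∧ edge y ∈ T}.ncard ≤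
      {S | IsMaximalIndep Interleaved {a | a ∈ diagonalPairs} S ∧ {x, y} ⊆ S}.ncard := by
  have himage : ∀ T : Finset (Finset (Fin 7)), IsTriangulation T →
      edge '' ({a | a ∈ diagonalPairs} ∩ edge ⁻¹' T) = T := fun T hT => by
    rw [Set.image_inter_preimage, Set.inter_eq_right]
    exact (isTriangulation_iff.1 hT).1
  refine Set.ncard_le_ncard_of_injOn (fun T => {a | a ∈ diagonalPairs} ∩ edge ⁻¹' T) ?_ ?_ ?_
  · rintro T ⟨hT, hxT, hyT⟩
    refine ⟨(isTriangulation_iff.1 hT).preimage edge_injOn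
      fun _ ha _ hb => crosses_edge_iff ha hb, ?_⟩
    rintro a (rfl | rfl)
    exacts [⟨hx, hxT⟩, ⟨hy, hyT⟩]
  · intro T hT T' hT' h
    apply Finset.coe_injective
    rw [← himage T hT.1, ← himage T' hT'.1]
    exact congrArg (edge '' ·) h
  · exact (List.finite_toSet diagonalPairs).finite_subsets.subset fun S hS => hS.1.1

theorem length_maximalIndeps_indepLinkList_le :
    ∀ x ∈ diagonalPairs, ∀ y ∈ diagonalPairs, x ≠ y → ¬ Interleaved x y →
      (maximalIndeps Interleaved (indepLinkList Interleaved diagonalPairs [x, y])).length ≤ 5 := by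
  decide +kernel

theorem ncard_triangulations_containing_le {p q : Finset (Fin 7)} (hp : IsDiag p)
    (hq : IsDiag q) (hpq : p ≠ q) (hc : ¬ Crosses p q) :
    {T | IsTriangulation T ∧ p ∈ T ∧ q ∈ T}.ncard ≤ 5 := by
  obtain ⟨x, hx, rfl⟩ := isDiag_iff.1 hp
  obtain ⟨y, hy, rfl⟩ := isDiag_iff.1 hq
  set L := indepLinkList Interleaved diagonalPairs [x, y]
  have hlink : indepLink Interleaved {a | a ∈ diagonalPairs} {x, y} = {a | a ∈ L} := by
    rw [setOf_mem_indepLinkList]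
    congr 1
    ext a
    simp
  calc _ ≤ {S | IsMaximalIndep Interleaved {a | a ∈ diagonalPairs} S ∧ {x, y} ⊆ S}.ncard :=
        ncard_triangulations_le_ncard_isMaximalIndep hx hy
    _ ≤ {S | IsMaximalIndep Interleaved {a | a ∈ L} S}.ncard :=
        hlink ▸ ncard_setOf_isMaximalIndep_subset_le (List.finite_toSet _)
    _ ≤ (maximalIndeps Interleaved L).length := ncard_setOf_isMaximalIndep_le_length _ _
    _ ≤ 5 := length_maximalIndeps_indepLinkList_le x hx y hy (fun h => hpq (h ▸ rfl))
        ((crosses_edge_iff hx hy).not.1 hc)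

/-- The fan at vertex `0`, followed by the four triangulations obtained by flipping one of its
diagonals. -/
def fanAndFlips : List (List (Fin 7 × Fin 7)) :=
  [[(0, 2), (0, 3), (0, 4), (0, 5)], [(1, 3), (0, 3), (0, 4), (0, 5)],
    [(0, 2), (2, 4), (0, 4), (0, 5)], [(0, 2), (0, 3), (3, 5), (0, 5)],
    [(0, 2), (0, 3), (0, 4), (4, 6)]]

theorem isMaximalIndepList_of_mem_fanAndFlips :
    ∀ l ∈ fanAndFlips, isMaximalIndepList Interleaved diagonalPairs l = true := by
  decide

theorem two_le_card_inter_of_mem_fanAndFlips :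
    ∀ l ∈ fanAndFlips, ∀ l' ∈ fanAndFlips, 2 ≤ (l.toFinset ∩ l'.toFinset).card := by
  decide

theorem eq_of_toFinset_eq_of_mem_fanAndFlips :
    ∀ l ∈ fanAndFlips, ∀ l' ∈ fanAndFlips, l.toFinset = l'.toFinset → l = l' := by
  decide

theorem card_toFinset_fanAndFlips : fanAndFlips.toFinset.card = 5 := by decide

theorem exists_not_mem_fanAndFlips : ∀ x : Fin 7 × Fin 7, ∃ l ∈ fanAndFlips, x ∉ l := by
  decide

theorem exists_two_intersecting_ne_setOf_pair_mem :
    ∃ F : Set (Finset (Finset (Fin 7))),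
      (∀ T ∈ F, IsTriangulation T) ∧
      (∀ T ∈ F, ∀ T' ∈ F, 2 ≤ (T ∩ T').card) ∧
      F.ncard = 5 ∧
      ¬ ∃ p q : Finset (Fin 7), IsDiag p ∧ IsDiag q ∧ p ≠ q ∧
        F = {T | IsTriangulation T ∧ p ∈ T ∧ q ∈ T} := by
  have hsub : ∀ l ∈ fanAndFlips, ∀ a ∈ l, a ∈ diagonalPairs := fun l hl =>
    ((isMaximalIndepList_iff Interleaved).1 (isMaximalIndepList_of_mem_fanAndFlips l hl)).1
  refine ⟨toDiagonals '' {l | l ∈ fanAndFlips}, ?_, ?_, ?_, ?_⟩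
  · rintro _ ⟨l, hl, rfl⟩
    exact isTriangulation_toDiagonals (isMaximalIndepList_of_mem_fanAndFlips l hl)
  · rintro _ ⟨l, hl, rfl⟩ _ ⟨l', hl', rfl⟩
    rw [card_toDiagonals_inter (hsub l hl) (hsub l' hl')]
    exact two_le_card_inter_of_mem_fanAndFlips l hl l' hl'
  · have hinj : Set.InjOn toDiagonals {l | l ∈ fanAndFlips} := fun l hl l' hl' h =>
      eq_of_toFinset_eq_of_mem_fanAndFlips l hl l' hl'
        (toFinset_eq_of_toDiagonals_eq (hsub l hl) (hsub l' hl') h)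
    rw [hinj.ncard_image, ← List.coe_toFinset, Set.ncard_coe_finset, card_toFinset_fanAndFlips]
  · rintro ⟨p, q, -, -, -, hF⟩
    have hp : ∀ l ∈ fanAndFlips, p ∈ toDiagonals l := fun l hl => by
      have hmem : toDiagonals l ∈ toDiagonals '' {l | l ∈ fanAndFlips} := ⟨l, hl, rfl⟩
      rw [hF] at hmem
      exact hmem.2.1
    obtain ⟨x, hx, rfl⟩ := Finset.mem_image.1 (hp _ List.mem_cons_self)
    have hxD := hsub _ List.mem_cons_self x (List.mem_toFinset.1 hx)
    obtain ⟨l, hl, hxl⟩ := exists_not_mem_fanAndFlips x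
    obtain ⟨y, hy, hyx⟩ := Finset.mem_image.1 (hp l hl)
    have hyl := List.mem_toFinset.1 hy
    exact hxl (edge_injOn (hsub l hl y hyl) hxD hyx ▸ hyl)

end Heptagon

/-- there is a 2-intersecting family of 5 triangulations of the heptagon
which is not the family of all triangulations containing a fixed pair of diagonals;
and no pair of distinct noncrossing diagonals lies in more than 5 triangulations. -/
theorem stmt15 :
    (∃ F : Set (Finset (Finset (Fin 7))),
      (∀ T ∈ F, IsTriangulation T) ∧
      (∀ T ∈ F, ∀ T' ∈ F, 2 ≤ (T ∩ T').card) ∧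
      F.ncard = 5 ∧
      ¬ ∃ p q : Finset (Fin 7), IsDiag p ∧ IsDiag q ∧ p ≠ q ∧
        F = {T | IsTriangulation T ∧ p ∈ T ∧ q ∈ T}) ∧
    (∀ p q : Finset (Fin 7), IsDiag p → IsDiag q → p ≠ q → ¬ Crosses p q →
      {T | IsTriangulation T ∧ p ∈ T ∧ q ∈ T}.ncard ≤ 5) :=
  ⟨exists_two_intersecting_ne_setOf_pair_mem, fun _ _ => ncard_triangulations_containing_le⟩
end

section
/- Let C be a flag pure 2-dimensional complex without boundary, F an intersecting family of triangles of C, and σ = {a,b,c} a triangle of C that is an inclusion-minimal base face for F (every triangle in F meets σ, and no proper subset of σ meets all of F). Then |F| ≤ 4. -/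
variable {V : Type*} [DecidableEq V]

/-!
Write `σ = {x, y, z}`. By minimality, for each vertex `x` of `σ` some `B x ∈ F` meets `σ` exactly
in `x`. Flagness and dimension two forbid a vertex outside `σ` adjacent to all of `σ`; hence a
triangle of `F` meeting `σ` in two vertices would, through its common vertex with `B x` for the
third vertex `x`, produce such a vertex. So every `A ∈ F` other than `σ` meets `σ` in one vertex
`x`, and then its other two vertices are forced: they are the vertices of `B y` and `B z` adjacent
to `x`, which are unique because `B y ∩ B z` contains a vertex adjacent to `y` and `z` but not to
`x`. Thus `A = B x`, and `F ⊆ {σ, B x, B y, B z}`.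
-/

open Finset

namespace Finset

lemma eq_of_mem_of_card_eq_three {B : Finset V} (hB : #B = 3) {y q s s' : V}
    (hy : y ∈ B) (hq : q ∈ B) (hyq : y ≠ q) (hs : s ∈ B) (hs' : s' ∈ B)
    (hsy : s ≠ y) (hsq : s ≠ q) (hs'y : s' ≠ y) (hs'q : s' ≠ q) : s = s' := by
  have hcard : #((B.erase y).erase q) ≤ 1 := by
    rw [card_erase_of_mem (mem_erase.2 ⟨hyq.symm, hq⟩), card_erase_of_mem hy, hB]
  exact card_le_one.1 hcard s (by simp [*]) s' (by simp [*])

lemma mem_of_inter_eq_singleton {A σ : Finset V} {x : V} (h : A ∩ σ = {x}) : x ∈ A ∧ x ∈ σ :=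
  mem_inter.1 (h ▸ mem_singleton_self x)

lemma eq_of_mem_of_inter_eq_singleton {A σ : Finset V} {x w : V} (h : A ∩ σ = {x})
    (hwA : w ∈ A) (hwσ : w ∈ σ) : w = x :=
  mem_singleton.1 (h ▸ mem_inter.2 ⟨hwA, hwσ⟩)

lemma eq_of_card_le_card_inter {A A' : Finset V} (h : #A ≤ #(A ∩ A')) (h' : #A' ≤ #(A ∩ A')) :
    A = A' :=
  (eq_of_subset_of_card_le inter_subset_left h).symm.trans
    (eq_of_subset_of_card_le inter_subset_right h')

end Finset

lemma IsComplex.pair_mem_s18 {C : Set (Finset V)} (hC : IsComplex C) {A : Finset V} (hA : A ∈ C)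
    {u w : V} (hu : u ∈ A) (hw : w ∈ A) : ({u, w} : Finset V) ∈ C :=
  hC A hA _ (insert_subset hu (singleton_subset_iff.2 hw))

lemma mem_of_forall_pair_mem {C : Set (Finset V)} (hC : IsComplex C) (hflag : IsFlag C)
    (hdim : ∀ τ ∈ C, #τ ≤ 3) {σ : Finset V} (hσ : σ ∈ C) (hcard : #σ = 3) {v : V}
    (hv : ∀ w ∈ σ, ({v, w} : Finset V) ∈ C) : v ∈ σ := by
  by_contra hvσ
  obtain ⟨w, hw⟩ : σ.Nonempty := card_pos.1 (by omega)
  have hface : insert v σ ∈ C := by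
    refine hflag _ (insert_nonempty v σ) ?_
    simp only [forall_mem_insert]
    refine ⟨⟨?_, hv⟩, fun u hu => ⟨?_, fun u' hu' => hC.pair_mem_s18 hσ hu hu'⟩⟩
    · simpa using hC _ (hv w hw) {v} (by simp)
    · rw [pair_comm]
      exact hv u hu
  have := hdim _ hface
  rw [card_insert_of_notMem hvσ] at this
  omega

lemma exists_inter_eq_singleton {F : Set (Finset V)} {σ : Finset V}
    (hbase : ∀ A ∈ F, (A ∩ σ).Nonempty) (hmin : ∀ τ : Finset V, τ ⊂ σ → ∃ A ∈ F, A ∩ τ = ∅)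
    {x : V} (hx : x ∈ σ) : ∃ B ∈ F, B ∩ σ = {x} := by
  obtain ⟨B, hB, hBx⟩ := hmin (σ.erase x) (erase_ssubset hx)
  rw [inter_erase, erase_eq_empty_iff] at hBx
  exact ⟨B, hB, hBx.resolve_left (hbase B hB).ne_empty⟩

def AbsorbsCommonNeighbours (F : Set (Finset V)) (σ : Finset V) : Prop :=
  ∀ v, (∀ w ∈ σ, ∃ P ∈ F, v ∈ P ∧ w ∈ P) → v ∈ σ

section AbsorbsCommonNeighbours

variable {F : Set (Finset V)} {σ : Finset V}

lemma mem_of_erase_subset (habs : AbsorbsCommonNeighbours F σ) (hFint : Intersecting F)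
    {A B : Finset V} (hA : A ∈ F) (hB : B ∈ F) {x : V} (hBσ : B ∩ σ = {x})
    (hsub : σ.erase x ⊆ A) : x ∈ A := by
  obtain ⟨t, ht⟩ := hFint A hA B hB
  obtain ⟨htA, htB⟩ := mem_inter.1 ht
  have htσ : t ∈ σ := habs t fun w hw => by
    by_cases hwx : w = x
    · exact ⟨B, hB, htB, hwx ▸ (mem_of_inter_eq_singleton hBσ).1⟩
    · exact ⟨A, hA, htA, hsub (mem_erase.2 ⟨hwx, hw⟩)⟩
  exact eq_of_mem_of_inter_eq_singleton hBσ htB htσ ▸ htA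

lemma exists_inter_eq_singleton_of_ne (habs : AbsorbsCommonNeighbours F σ)
    (hFint : Intersecting F) (hF3 : ∀ A ∈ F, #A = 3) (hcard : #σ = 3)
    (hbase : ∀ A ∈ F, (A ∩ σ).Nonempty) (hsingle : ∀ x ∈ σ, ∃ B ∈ F, B ∩ σ = {x})
    {A : Finset V} (hA : A ∈ F) (hAσ : A ≠ σ) : ∃ x ∈ σ, A ∩ σ = {x} := by
  obtain ⟨x, hxσ, hxA⟩ : ∃ x ∈ σ, x ∉ A := by
    by_contra! hσA
    exact hAσ (eq_of_subset_of_card_le hσA (by rw [hF3 A hA, hcard])).symm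
  obtain ⟨B, hB, hBσ⟩ := hsingle x hxσ
  obtain ⟨y, hyσ, hyA⟩ : ∃ y ∈ σ.erase x, y ∉ A := by
    by_contra! hsub
    exact hxA (mem_of_erase_subset habs hFint hA hB hBσ hsub)
  obtain ⟨z, hz⟩ := card_eq_one.1 (by
    rw [card_erase_of_mem hyσ, card_erase_of_mem hxσ, hcard] : #((σ.erase x).erase y) = 1)
  have hzσ : z ∈ σ := mem_of_mem_erase (mem_of_mem_erase (hz ▸ mem_singleton_self z))
  refine ⟨z, hzσ, (hbase A hA).subset_singleton_iff.1 (hz ▸ fun w hw => ?_)⟩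
  obtain ⟨hwA, hwσ⟩ := mem_inter.1 hw
  exact mem_erase.2 ⟨fun h => hyA (h ▸ hwA), mem_erase.2 ⟨fun h => hxA (h ▸ hwA), hwσ⟩⟩

lemma mem_of_mem_of_mem_of_mem (habs : AbsorbsCommonNeighbours F σ) {x y z : V}
    (hσ : σ = {x, y, z}) {P Q R : Finset V} (hP : P ∈ F) (hQ : Q ∈ F) (hR : R ∈ F)
    (hxP : x ∈ P) (hyQ : y ∈ Q) (hzR : z ∈ R) {v : V} (hvP : v ∈ P) (hvQ : v ∈ Q)
    (hvR : v ∈ R) : v ∈ σ := by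
  refine habs v ?_
  subst hσ
  simp only [forall_mem_insert, mem_singleton, forall_eq]
  exact ⟨⟨P, hP, hvP, hxP⟩, ⟨Q, hQ, hvQ, hyQ⟩, ⟨R, hR, hvR, hzR⟩⟩

/-- `By` shares a vertex `q ≠ y` with `Bz`; being adjacent to `y` and `z`, `q` is not adjacent to
`x`, so `By` has at most one vertex other than `y` adjacent to `x`. -/
lemma eq_of_mem_inter_of_mem_inter (habs : AbsorbsCommonNeighbours F σ)
    (hFint : Intersecting F) (hF3 : ∀ A ∈ F, #A = 3) {x y z : V} (hσ : σ = {x, y, z})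
    (hyz : y ≠ z) {By Bz : Finset V} (hBy : By ∈ F) (hBz : Bz ∈ F) (hByσ : By ∩ σ = {y})
    (hBzσ : Bz ∩ σ = {z}) {A A' : Finset V} (hA : A ∈ F) (hA' : A' ∈ F) (hxA : x ∈ A)
    (hxA' : x ∈ A') {s s' : V} (hs : s ∈ A ∩ By) (hs' : s' ∈ A' ∩ By) (hsy : s ≠ y)
    (hs'y : s' ≠ y) : s = s' := by
  have hyσ : y ∈ σ := by simp [hσ]
  obtain ⟨q, hq⟩ := hFint By hBy Bz hBz
  obtain ⟨hqBy, hqBz⟩ := mem_inter.1 hq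
  have hyBy := (mem_of_inter_eq_singleton hByσ).1
  have hzBz := (mem_of_inter_eq_singleton hBzσ).1
  have hqy : q ≠ y := fun h => hyz (eq_of_mem_of_inter_eq_singleton hBzσ (h ▸ hqBz) hyσ)
  have hne : ∀ {P t}, P ∈ F → x ∈ P → t ∈ P ∩ By → t ≠ y → t ≠ q := by
    rintro P t hP hxP ht hty rfl
    obtain ⟨htP, htBy⟩ := mem_inter.1 ht
    exact hty (eq_of_mem_of_inter_eq_singleton hByσ htBy
      (mem_of_mem_of_mem_of_mem habs hσ hP hBy hBz hxP hyBy hzBz htP htBy hqBz))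
  exact eq_of_mem_of_card_eq_three (hF3 By hBy) hyBy hqBy hqy.symm (mem_inter.1 hs).2
    (mem_inter.1 hs').2 hsy (hne hA hxA hs hsy) hs'y (hne hA' hxA' hs' hs'y)

lemma three_le_card_inter (habs : AbsorbsCommonNeighbours F σ) (hFint : Intersecting F)
    (hF3 : ∀ A ∈ F, #A = 3) {x y z : V} (hσ : σ = {x, y, z}) (hyx : y ≠ x) (hzx : z ≠ x)
    (hyz : y ≠ z) {By Bz : Finset V} (hBy : By ∈ F) (hBz : Bz ∈ F) (hByσ : By ∩ σ = {y})
    (hBzσ : Bz ∩ σ = {z}) {A A' : Finset V} (hA : A ∈ F) (hA' : A' ∈ F) (hAσ : A ∩ σ = {x})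
    (hA'σ : A' ∩ σ = {x}) : 3 ≤ #(A ∩ A') := by
  obtain ⟨hxA, hxσ⟩ := mem_of_inter_eq_singleton hAσ
  have hxA' := (mem_of_inter_eq_singleton hA'σ).1
  have hσ' : σ = {x, z, y} := by rw [hσ, pair_comm]
  have hnotin : ∀ {P w}, P ∩ σ = {x} → w ∈ σ → w ≠ x → w ∉ P := fun hPσ hwσ hwx hwP =>
    hwx (eq_of_mem_of_inter_eq_singleton hPσ hwP hwσ)
  have hyσ : y ∈ σ := by simp [hσ]
  have hzσ : z ∈ σ := by simp [hσ]
  obtain ⟨s, hs⟩ := hFint A hA By hBy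
  obtain ⟨s', hs'⟩ := hFint A' hA' By hBy
  obtain ⟨t, ht⟩ := hFint A hA Bz hBz
  obtain ⟨t', ht'⟩ := hFint A' hA' Bz hBz
  obtain ⟨⟨hsA, hsBy⟩, ⟨hs'A', -⟩⟩ := And.intro (mem_inter.1 hs) (mem_inter.1 hs')
  obtain ⟨⟨htA, htBz⟩, ⟨ht'A', -⟩⟩ := And.intro (mem_inter.1 ht) (mem_inter.1 ht')
  have hss' : s = s' := eq_of_mem_inter_of_mem_inter habs hFint hF3 hσ hyz hBy hBz hByσ hBzσ
    hA hA' hxA hxA' hs hs' (fun h => hnotin hAσ hyσ hyx (h ▸ hsA))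
    (fun h => hnotin hA'σ hyσ hyx (h ▸ hs'A'))
  have htt' : t = t' := eq_of_mem_inter_of_mem_inter habs hFint hF3 hσ' hyz.symm hBz hBy hBzσ
    hByσ hA hA' hxA hxA' ht ht' (fun h => hnotin hAσ hzσ hzx (h ▸ htA))
    (fun h => hnotin hA'σ hzσ hzx (h ▸ ht'A'))
  have hxs : x ≠ s := fun h => hyx (eq_of_mem_of_inter_eq_singleton hByσ (h ▸ hsBy) hxσ).symm
  have hxt : x ≠ t := fun h => hzx (eq_of_mem_of_inter_eq_singleton hBzσ (h ▸ htBz) hxσ).symm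
  have hst : s ≠ t := fun h => hxs (eq_of_mem_of_inter_eq_singleton hAσ hsA
    (mem_of_mem_of_mem_of_mem habs hσ hA hBy hBz hxA (mem_of_inter_eq_singleton hByσ).1
      (mem_of_inter_eq_singleton hBzσ).1 hsA hsBy (h ▸ htBz))).symm
  have hsub : ({x, s, t} : Finset V) ⊆ A ∩ A' := by
    simp only [insert_subset_iff, singleton_subset_iff, mem_inter]
    exact ⟨⟨hxA, hxA'⟩, ⟨hsA, hss' ▸ hs'A'⟩, ⟨htA, htt' ▸ ht'A'⟩⟩
  exact card_eq_three.2 ⟨x, s, t, hxs, hxt, hst, rfl⟩ ▸ card_le_card hsub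

lemma eq_of_inter_eq_singleton (habs : AbsorbsCommonNeighbours F σ) (hFint : Intersecting F)
    (hF3 : ∀ A ∈ F, #A = 3) (hcard : #σ = 3) (hsingle : ∀ x ∈ σ, ∃ B ∈ F, B ∩ σ = {x})
    {A A' : Finset V} (hA : A ∈ F) (hA' : A' ∈ F) {x : V} (hAσ : A ∩ σ = {x})
    (hA'σ : A' ∩ σ = {x}) : A = A' := by
  have hxσ := (mem_of_inter_eq_singleton hAσ).2
  obtain ⟨y, z, hyz, hyzσ⟩ := card_eq_two.1 (by
    rw [card_erase_of_mem hxσ, hcard] : #(σ.erase x) = 2)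
  have hσ : σ = {x, y, z} := by rw [← hyzσ, insert_erase hxσ]
  obtain ⟨hyx, hyσ⟩ := mem_erase.1 (hyzσ ▸ mem_insert_self y {z})
  obtain ⟨hzx, hzσ⟩ := mem_erase.1 (hyzσ ▸ mem_insert_of_mem (mem_singleton_self z))
  obtain ⟨By, hBy, hByσ⟩ := hsingle y hyσ
  obtain ⟨Bz, hBz, hBzσ⟩ := hsingle z hzσ
  have h3 := three_le_card_inter habs hFint hF3 hσ hyx hzx hyz hBy hBz hByσ hBzσ hA hA' hAσ hA'σ
  exact eq_of_card_le_card_inter (hF3 A hA ▸ h3) (hF3 A' hA' ▸ h3)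

end AbsorbsCommonNeighbours

theorem stmt18_general {V : Type*} [DecidableEq V] (C : Set (Finset V))
    (hC : IsComplex C) (hflag : IsFlag C) (hpure : IsPure C 2)
    (F : Set (Finset V)) (hFfac : ∀ A ∈ F, IsFacet C A) (hFint : Intersecting F)
    (σ : Finset V) (hσ : σ ∈ C) (hcard : σ.card = 3)
    (hbase : ∀ A ∈ F, (A ∩ σ).Nonempty)
    (hmin : ∀ τ : Finset V, τ ⊂ σ → ∃ A ∈ F, A ∩ τ = ∅) :
    F.ncard ≤ 4 := by
  have hdim : ∀ τ ∈ C, #τ ≤ 3 := fun τ hτ => by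
    obtain ⟨A, hA, hτA⟩ := hpure.1 τ hτ
    exact (card_le_card hτA).trans (hpure.2 A hA).le
  have hF3 : ∀ A ∈ F, #A = 3 := fun A hA => hpure.2 A (hFfac A hA)
  have habs : AbsorbsCommonNeighbours F σ := fun v hv =>
    mem_of_forall_pair_mem hC hflag hdim hσ hcard fun w hw => by
      obtain ⟨P, hP, hvP, hwP⟩ := hv w hw
      exact hC.pair_mem_s18 (hFfac P hP).1 hvP hwP
  have hsingle : ∀ x ∈ σ, ∃ B ∈ F, B ∩ σ = {x} := fun x hx =>
    exists_inter_eq_singleton hbase hmin hx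
  choose! B hBF hBσ using id hsingle
  have hFsub : F ⊆ ↑(insert σ (σ.image B)) := fun A hA => by
    rw [coe_insert, coe_image]
    by_cases hAσ : A = σ
    · exact Or.inl hAσ
    obtain ⟨x, hx, hAx⟩ :=
      exists_inter_eq_singleton_of_ne habs hFint hF3 hcard hbase hsingle hA hAσ
    exact Or.inr ⟨x, hx, (eq_of_inter_eq_singleton habs hFint hF3 hcard hsingle hA (hBF x hx)
      hAx (hBσ x hx)).symm⟩
  calc F.ncard ≤ #(insert σ (σ.image B)) := by
        rw [← Set.ncard_coe_finset]
        exact Set.ncard_le_ncard hFsub (finite_toSet _)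
    _ ≤ #(σ.image B) + 1 := card_insert_le _ _
    _ ≤ 4 := by have := card_image_le (s := σ) (f := B); omega

/-- if a triangle σ of a flag pure 2-complex without boundary is an
inclusion-minimal base face for an intersecting family F of triangles, then |F| ≤ 4. -/
theorem stmt18 {V : Type*} [DecidableEq V] [Fintype V] (C : Set (Finset V))
    (hC : IsComplex C) (hflag : IsFlag C) (hpure : IsPure C 2) (hnb : NoBoundary C)
    (F : Set (Finset V)) (hFfac : ∀ A ∈ F, IsFacet C A) (hFint : Intersecting F)
    (σ : Finset V) (hσ : σ ∈ C) (hcard : σ.card = 3)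
    (hbase : ∀ A ∈ F, (A ∩ σ).Nonempty)
    (hmin : ∀ τ : Finset V, τ ⊂ σ → ∃ A ∈ F, A ∩ τ = ∅) :
    F.ncard ≤ 4 :=
  stmt18_general C hC hflag hpure F hFfac hFint σ hσ hcard hbase hmin
end
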